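/- arXiv:2502.09161 — 3 statements merged into one kernel-verified Lean document; each statement's English description precedes it below -/
import Mathlib

section
/- Fix a finite multiset M of positive integers. There exists a bijection T ↦ T̂ of 𝒯_M onto itself such that for every T ∈ 𝒯_M: (a) for every q ≥ 1, the number of nodes of degree q in T equals the number of nodes of degree q−1 at odd levels in T̂; (b) the number of leaves of T equals the number of nodes at even levels in T̂; (c) for every k ≥ 1, the number of youngest leaves v of T such that the path from v towards the root reaches after exactly k edges the first node that is not a youngest node equals the number of internal nodes of degree k at even levels of T̂ (in particular ystleaf(T) = elint(T̂)); and (d) oleaf(T) = oleaf(T̂). -/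
/-- Labeled plane trees: a node with a label in `ℕ` and a (left-to-right ordered)
list of children. -/
inductive LTree : Type where
  | node : ℕ → List LTree → LTree

namespace LTree

/-- The label of the root. -/
def label : LTree → ℕ
  | node a _ => a

/-- The list of children of the root, from left to right. -/
def children : LTree → List LTree
  | node _ cs => cs

/-- A tree consisting of a single node is a leaf. -/
def isLeaf (t : LTree) : Bool := t.children.isEmpty

/-- The list of all subtrees (i.e. all nodes) of a tree. -/
def subtrees : LTree → List LTree
  | node a cs => node a cs :: (cs.attach.map (fun c => subtrees c.1)).flatten
decreasing_by
  simp only [LTree.node.sizeOf_spec]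
  have := List.sizeOf_lt_of_mem c.2
  omega

/-- The multiset of labels of all nodes of a tree. -/
def labels (T : LTree) : Multiset ℕ := (T.subtrees.map label : List ℕ)

/-- `T` is a weakly increasing tree on the multiset `M`: the root is labeled `0`,
the multiset of labels is `M ∪ {0}`, labels weakly increase along root-to-leaf paths,
and the labels of the children of each node weakly increase from right to left. -/
def IsWIT (M : Multiset ℕ) (T : LTree) : Prop :=
  T.label = 0 ∧ T.labels = 0 ::ₘ M ∧
  ∀ t ∈ T.subtrees, (∀ c ∈ t.children, t.label ≤ c.label) ∧
    List.Chain' (fun a b => b ≤ a) (t.children.map label)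

/-- `T` is (an encoding of) a plane tree with `n` edges: all labels are zero
and there are `n + 1` nodes. -/
def IsPlane (n : ℕ) (T : LTree) : Prop :=
  (∀ t ∈ T.subtrees, t.label = 0) ∧ T.subtrees.length = n + 1

/-- The number of singleton leaves: leaves that are the only child of their parent. -/
def sleaf (T : LTree) : ℕ :=
  T.subtrees.countP (fun t => match t.children with
    | [c] => c.isLeaf
    | _ => false)

/-- The number of elder leaves: leaves that are the leftmost child of their parent
and have siblings. -/
def eleaf (T : LTree) : ℕ :=
  T.subtrees.countP (fun t => match t.children with
    | c :: _ :: _ => c.isLeaf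
    | _ => false)

/-- The number of young leaves: leaves that are not the leftmost child of their parent. -/
def yleaf (T : LTree) : ℕ :=
  (T.subtrees.map (fun t => t.children.tail.countP isLeaf)).sum

/-- The number of young internal nodes: internal nodes whose leftmost child is internal. -/
def yint (T : LTree) : ℕ :=
  T.subtrees.countP (fun t => match t.children with
    | c :: _ => !c.isLeaf
    | _ => false)

/-- The number of singleton internal nodes: parents of a singleton leaf. -/
def sint (T : LTree) : ℕ :=
  T.subtrees.countP (fun t => match t.children with
    | [c] => c.isLeaf
    | _ => false)

/-- The number of elder internal nodes: parents of an elder leaf. -/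
def eint (T : LTree) : ℕ :=
  T.subtrees.countP (fun t => match t.children with
    | c :: _ :: _ => c.isLeaf
    | _ => false)

/-- The number of old leaves: leaves that are the leftmost child of their parent. -/
def oleaf (T : LTree) : ℕ := sleaf T + eleaf T

/-- The number of old internal nodes. -/
def oint (T : LTree) : ℕ := sint T + eint T

/-- All subtrees of a tree together with their levels, the root being at level `d`. -/
def subtreesL (d : ℕ) : LTree → List (ℕ × LTree)
  | node a cs => (d, node a cs) :: (cs.attach.map (fun c => subtreesL (d + 1) c.1)).flatten
decreasing_by
  simp only [LTree.node.sizeOf_spec]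
  have := List.sizeOf_lt_of_mem c.2
  omega

/-- The number of internal nodes at even levels. -/
def elint (T : LTree) : ℕ :=
  (subtreesL 0 T).countP (fun p => p.1 % 2 == 0 && !p.2.isLeaf)

/-- The number of leaves at even levels. -/
def elleaf (T : LTree) : ℕ :=
  (subtreesL 0 T).countP (fun p => p.1 % 2 == 0 && p.2.isLeaf)

/-- The number of nodes of degree `q`. -/
def degCount (q : ℕ) (T : LTree) : ℕ :=
  T.subtrees.countP (fun t => t.children.length == q)

/-- The number of nodes of degree `q` at odd levels. -/
def oddLevelDegCount (q : ℕ) (T : LTree) : ℕ :=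
  (subtreesL 0 T).countP (fun p => p.1 % 2 == 1 && p.2.children.length == q)

/-- The number of nodes at even levels. -/
def evenLevelCount (T : LTree) : ℕ :=
  (subtreesL 0 T).countP (fun p => p.1 % 2 == 0)

/-- The number of nodes of degree `k` at even levels. -/
def evenLevelDegCount (k : ℕ) (T : LTree) : ℕ :=
  (subtreesL 0 T).countP (fun p => p.1 % 2 == 0 && p.2.children.length == k)

/-- The number of leaves. -/
def leafCount (T : LTree) : ℕ := T.subtrees.countP isLeaf

/-- The number of youngest leaves: leaves that are the rightmost child of their parent. -/
def ystleaf (T : LTree) : ℕ :=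
  T.subtrees.countP (fun t => match t.children.getLast? with
    | some c => c.isLeaf
    | none => false)

/-- The length of the maximal chain of rightmost children starting at the root:
`0` for a leaf, and `1 +` the spine length of the rightmost child otherwise. -/
def lastSpine : LTree → ℕ
  | node _ [] => 0
  | node a (c :: cs) => 1 + lastSpine ((c :: cs).getLast (by simp))
decreasing_by
  simp only [LTree.node.sizeOf_spec]
  have := List.sizeOf_lt_of_mem (List.getLast_mem (l := c :: cs) (by simp))
  omega

/-- The number of non-youngest nodes `w` (the root, or nodes that are not the rightmost
child of their parent) such that the maximal chain of rightmost children starting at `w`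
has length exactly `k`.  For `k ≥ 1` this is the number of youngest leaves `v` such that
the path from `v` towards the root reaches after exactly `k` edges the first
non-youngest node. -/
def spineCount (k : ℕ) (T : LTree) : ℕ :=
  (if lastSpine T = k then 1 else 0) +
    (T.subtrees.map (fun t => t.children.dropLast.countP (fun c => lastSpine c == k))).sum

end LTree

/-!
Deutsch's map is defined by recursion on the rightmost child: if `T = a(d₁ … dₘ r)`, then
`T̂` has root `a`, whose children are the children of `r̂` followed by one new node, labelled
like `r`, with children `d̂₁ … d̂ₘ`. The last child of the root of `T̂` records how to undo this
step, so the map is invertible; it preserves the labels, and `T̂` satisfies the local order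
conditions exactly when `T` does, so it permutes `𝒯_M`.

Every statistic of the theorem is a sum over the nodes of a tree, possibly restricted to one
parity of level. Passing from `r̂, d̂₁, …, d̂ₘ` to `T̂`, the root of `r̂` merges with `a`, the
children of `r̂` keep their levels, the `d̂ᵢ` move two levels down, and the single new node sits
at level 1 with degree `m`. So each statistic of `T̂` satisfies, in terms of `r̂` and the `d̂ᵢ`,
the same recursion as its partner statistic of `T` in terms of `r` and the `dᵢ`, and induction
on this decomposition proves (a)–(d). For (c), the root of `T̂` has degree `lastSpine T`.
-/

theorem List.countP_eq_sum_map_ite {α : Type*} (p : α → Bool) (l : List α) :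
    l.countP p = (l.map fun x => if p x then 1 else 0).sum := by
  induction l <;> simp [List.countP_cons, *, add_comm]

theorem List.pairwise_ge_append_pair {α : Type*} [Preorder α] {l : List α} {x y : α} :
    (l ++ [x, y]).Pairwise (· ≥ ·) ↔ (l ++ [x]).Pairwise (· ≥ ·) ∧ y ≤ x := by
  rw [show l ++ [x, y] = l ++ [x] ++ [y] by simp, List.pairwise_append]
  simp only [List.pairwise_singleton, List.mem_singleton, forall_eq, true_and]
  refine and_congr_right fun h => ⟨fun hy => hy x (by simp), fun hxy z hz => ?_⟩
  obtain hz | hz := List.mem_append.1 hz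
  · exact le_trans hxy ((List.pairwise_append.1 h).2.2 z hz x (by simp))
  · rwa [List.mem_singleton.1 hz]

namespace LTree

@[simp] theorem children_node (a : ℕ) (cs : List LTree) : (node a cs).children = cs := rfl

@[simp] theorem label_node (a : ℕ) (cs : List LTree) : (node a cs).label = a := rfl

@[simp] theorem isLeaf_node (a : ℕ) (cs : List LTree) : (node a cs).isLeaf = cs.isEmpty := rfl

theorem eta : ∀ t : LTree, node t.label t.children = t
  | node _ _ => rfl

@[simp] theorem isLeaf_concat (a : ℕ) (ds : List LTree) (r : LTree) :
    (node a (ds ++ [r])).isLeaf = false := by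
  simp

theorem subtrees_node (a : ℕ) (cs : List LTree) :
    (node a cs).subtrees = node a cs :: (cs.map subtrees).flatten := by
  rw [subtrees, List.attach_map_val]

theorem forall_mem_subtrees_node {P : LTree → Prop} {a : ℕ} {cs : List LTree} :
    (∀ t ∈ (node a cs).subtrees, P t) ↔ P (node a cs) ∧ ∀ c ∈ cs, ∀ t ∈ c.subtrees, P t := by
  simp only [subtrees_node, List.forall_mem_cons, List.mem_flatten, List.mem_map]
  exact and_congr_right' ⟨fun h c hc t ht => h t ⟨_, ⟨c, hc, rfl⟩, ht⟩,
    fun h t ⟨_, ⟨c, hc, hct⟩, ht⟩ => h c hc t (hct ▸ ht)⟩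

theorem forall_mem_subtrees_iff {P : LTree → Prop} (t : LTree) :
    (∀ s ∈ t.subtrees, P s) ↔ P t ∧ ∀ c ∈ t.children, ∀ s ∈ c.subtrees, P s := by
  rw [← eta t, forall_mem_subtrees_node, children_node]

theorem subtreesL_node (d a : ℕ) (cs : List LTree) :
    subtreesL d (node a cs) = (d, node a cs) :: (cs.map (subtreesL (d + 1))).flatten := by
  rw [subtreesL, List.attach_map_val]

@[simp] theorem lastSpine_nil (a : ℕ) : lastSpine (node a []) = 0 := by
  rw [lastSpine]

theorem lastSpine_concat (a : ℕ) (ds : List LTree) (r : LTree) :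
    lastSpine (node a (ds ++ [r])) = 1 + lastSpine r := by
  have h : ∀ cs (h : cs ≠ []), lastSpine (node a cs) = 1 + lastSpine (cs.getLast h)
    | c :: cs, _ => by rw [lastSpine]
  simp [h]

theorem induction_on_children {motive : LTree → Prop}
    (h : ∀ a cs, (∀ c ∈ cs, motive c) → motive (node a cs)) : ∀ T, motive T
  | node a cs => h a cs fun c _ => induction_on_children h c

theorem concat_induction {motive : LTree → Prop} (leaf : ∀ a, motive (node a []))
    (concat : ∀ a ds r, (∀ d ∈ ds, motive d) → motive r → motive (node a (ds ++ [r]))) :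
    ∀ T, motive T := by
  refine induction_on_children fun a cs ih => ?_
  obtain rfl | ⟨ds, r, rfl⟩ := cs.eq_nil_or_concat'
  · exact leaf a
  · exact concat a ds r (fun d hd => ih d (by simp [hd])) (ih r (by simp))

theorem sizeOf_lt_of_mem_children {t c : LTree} (hc : c ∈ t.children) :
    sizeOf c < sizeOf t := by
  obtain ⟨a, cs⟩ := t
  have := List.sizeOf_lt_of_mem (α := LTree) hc
  simp only [node.sizeOf_spec, children_node] at this ⊢
  omega

theorem sizeOf_lt_of_concat (a : ℕ) (os : List LTree) (X : LTree) :
    sizeOf (node X.label os) < sizeOf (node a (os ++ [X])) := by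
  cases X
  simp only [node.sizeOf_spec, label_node]
  induction os <;> simp_all <;> omega

def deutsch : LTree → LTree
  | node a cs =>
    if h : cs = [] then node a [] else
      node a ((deutsch (cs.getLast h)).children ++
        [node (cs.getLast h).label (cs.dropLast.attach.map fun d => deutsch d.1)])
decreasing_by
  · exact sizeOf_lt_of_mem_children (t := node a cs) (List.getLast_mem h)
  · exact sizeOf_lt_of_mem_children (t := node a cs) (List.mem_of_mem_dropLast d.2)

def deutschInv : LTree → LTree
  | node a cs =>
    if h : cs = [] then node a [] else
      node a (((cs.getLast h).children.attach.map fun d => deutschInv d.1) ++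
        [deutschInv (node (cs.getLast h).label cs.dropLast)])
decreasing_by
  · exact (sizeOf_lt_of_mem_children d.2).trans
      (sizeOf_lt_of_mem_children (t := node a cs) (List.getLast_mem h))
  · conv_rhs => rw [← List.dropLast_append_getLast h]
    exact sizeOf_lt_of_concat _ _ _

@[simp] theorem deutsch_nil (a : ℕ) : deutsch (node a []) = node a [] := by
  rw [deutsch]; rfl

theorem deutsch_concat (a : ℕ) (ds : List LTree) (r : LTree) :
    deutsch (node a (ds ++ [r])) =
      node a ((deutsch r).children ++ [node r.label (ds.map deutsch)]) := by
  rw [deutsch]; simp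

@[simp] theorem deutschInv_nil (a : ℕ) : deutschInv (node a []) = node a [] := by
  rw [deutschInv]; rfl

theorem deutschInv_concat (a : ℕ) (os : List LTree) (X : LTree) :
    deutschInv (node a (os ++ [X])) =
      node a (X.children.map deutschInv ++ [deutschInv (node X.label os)]) := by
  rw [deutschInv]; simp

@[simp] theorem label_deutsch (T : LTree) : (deutsch T).label = T.label := by
  obtain ⟨a, cs⟩ := T
  obtain rfl | ⟨ds, r, rfl⟩ := cs.eq_nil_or_concat' <;> simp [deutsch_concat]

@[simp] theorem isLeaf_deutsch (T : LTree) : (deutsch T).isLeaf = T.isLeaf := by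
  obtain ⟨a, cs⟩ := T
  obtain rfl | ⟨ds, r, rfl⟩ := cs.eq_nil_or_concat'
  · rw [deutsch_nil]
  · rw [deutsch_concat, isLeaf_concat, isLeaf_concat]

theorem length_children_deutsch (T : LTree) : (deutsch T).children.length = lastSpine T := by
  induction T using concat_induction with
  | leaf a => simp
  | concat a ds r _ ihr => simp [deutsch_concat, lastSpine_concat, ihr, add_comm]

theorem deutschInv_deutsch (T : LTree) : deutschInv (deutsch T) = T := by
  induction T using concat_induction with
  | leaf a => simp
  | concat a ds r ihd ihr =>
    rw [deutsch_concat, deutschInv_concat, label_node, ← label_deutsch, eta, ihr, children_node,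
      List.map_map, List.map_congr_left (f := deutschInv ∘ deutsch) (g := id) ihd, List.map_id]

theorem deutsch_deutschInv : ∀ S : LTree, deutsch (deutschInv S) = S
  | node a cs => by
    obtain rfl | ⟨os, X, rfl⟩ := cs.eq_nil_or_concat'
    · simp
    have ihX := deutsch_deutschInv (node X.label os)
    have ihd : ∀ d ∈ X.children, deutsch (deutschInv d) = d := fun d _ => deutsch_deutschInv d
    have hlabel : (deutschInv (node X.label os)).label = X.label := by
      rw [← label_deutsch, ihX, label_node]
    rw [deutschInv_concat, deutsch_concat, ihX, hlabel, children_node, List.map_map,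
      List.map_congr_left (f := deutsch ∘ deutschInv) (g := id) ihd, List.map_id, eta]
termination_by S => sizeOf S
decreasing_by
  all_goals subst cs
  · exact sizeOf_lt_of_concat a os X
  · exact (sizeOf_lt_of_mem_children ‹_›).trans
      (sizeOf_lt_of_mem_children (t := node a (os ++ [X])) (by simp))

def deutschEquiv : LTree ≃ LTree :=
  ⟨deutsch, deutschInv, deutschInv_deutsch, deutsch_deutschInv⟩

section SubtreeSum

variable {β : Type*} [AddCommMonoid β] (g : LTree → β)

def subtreeSum (T : LTree) : β := (T.subtrees.map g).sum

theorem subtreeSum_eq (t : LTree) :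
    subtreeSum g t = g t + (t.children.map (subtreeSum g)).sum := by
  obtain ⟨a, cs⟩ := t
  simp [subtreeSum, subtrees_node, List.sum_flatten, Function.comp_def]
  rfl

theorem subtreeSum_concat (a : ℕ) (ds : List LTree) (r : LTree) :
    subtreeSum g (node a (ds ++ [r])) =
      g (node a (ds ++ [r])) + (ds.map (subtreeSum g)).sum + subtreeSum g r := by
  rw [subtreeSum_eq]
  simp [add_assoc]

/- The root of `deutsch r` is not a node of `deutsch T` (its children are adopted by the root
of `deutsch T`); its term is added on the left so that no subtraction occurs. -/
theorem subtreeSum_deutsch_concat (a : ℕ) (ds : List LTree) (r : LTree) :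
    subtreeSum g (deutsch (node a (ds ++ [r]))) + g (deutsch r) =
      g (deutsch (node a (ds ++ [r]))) + subtreeSum g (deutsch r) +
        g (node r.label (ds.map deutsch)) + (ds.map fun d => subtreeSum g (deutsch d)).sum := by
  rw [subtreeSum_eq g (deutsch r), deutsch_concat, subtreeSum_eq]
  simp only [children_node, List.map_append, List.sum_append, List.map_cons, List.map_nil,
    List.sum_cons, List.sum_nil]
  rw [subtreeSum_eq, children_node, List.map_map, Function.comp_def]
  abel

end SubtreeSum

theorem countP_subtrees (p : LTree → Bool) (T : LTree) :
    T.subtrees.countP p = subtreeSum (fun t => if p t then 1 else 0) T :=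
  List.countP_eq_sum_map_ite p T.subtrees

theorem labels_eq_subtreeSum (T : LTree) : T.labels = subtreeSum (fun t => {t.label}) T := by
  rw [labels, subtreeSum, ← Multiset.sum_coe, ← Multiset.map_coe, ← Multiset.map_coe]
  conv_lhs => rw [← Multiset.sum_map_singleton (Multiset.map label _), Multiset.map_map]
  rfl

theorem labels_deutsch (T : LTree) : (deutsch T).labels = T.labels := by
  simp only [labels_eq_subtreeSum]
  induction T using concat_induction with
  | leaf a => simp
  | concat a ds r ihd ihr =>
    have h := subtreeSum_deutsch_concat (fun t => ({t.label} : Multiset ℕ)) a ds r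
    simp only [label_deutsch, label_node] at h
    rw [subtreeSum_concat, ← ihr, ← List.map_congr_left ihd]
    refine add_right_cancel (b := {r.label}) (h.trans ?_)
    rw [label_node]
    abel

def NodeIncreasing (t : LTree) : Prop := (t.children.map label ++ [t.label]).Pairwise (· ≥ ·)

theorem isWIT_iff {M : Multiset ℕ} {T : LTree} : IsWIT M T ↔
    T.label = 0 ∧ T.labels = 0 ::ₘ M ∧ ∀ t ∈ T.subtrees, NodeIncreasing t := by
  refine and_congr_right' (and_congr_right' (forall₂_congr fun t _ => ?_))
  simp only [NodeIncreasing, List.pairwise_append, List.pairwise_singleton, List.mem_singleton,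
    forall_eq, true_and]
  refine and_comm.trans (and_congr (List.isChain_iff_pairwise (R := fun a b : ℕ => b ≤ a)) ?_)
  simp

theorem nodeIncreasing_deutsch_concat (a : ℕ) (ds : List LTree) (r : LTree) :
    NodeIncreasing (deutsch (node a (ds ++ [r]))) ∧
        NodeIncreasing (node r.label (ds.map deutsch)) ↔
      NodeIncreasing (node a (ds ++ [r])) ∧ NodeIncreasing (deutsch r) := by
  simp only [NodeIncreasing, deutsch_concat, children_node, label_node, label_deutsch,
    List.map_append, List.map_map, Function.comp_def, List.map_cons, List.map_nil,
    List.append_assoc, List.cons_append, List.nil_append, List.pairwise_ge_append_pair]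
  tauto

theorem forall_nodeIncreasing_deutsch_iff (T : LTree) :
    (∀ t ∈ (deutsch T).subtrees, NodeIncreasing t) ↔ ∀ t ∈ T.subtrees, NodeIncreasing t := by
  induction T using concat_induction with
  | leaf a => simp
  | concat a ds r ihd ihr =>
    have key := nodeIncreasing_deutsch_concat a ds r
    have hds := forall₂_congr ihd
    rw [forall_mem_subtrees_iff (deutsch r)] at ihr
    rw [deutsch_concat] at key ⊢
    simp only [forall_mem_subtrees_node, List.forall_mem_append, List.forall_mem_singleton,
      List.forall_mem_map] at ihr ⊢
    rw [hds, ← ihr]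
    tauto

theorem isWIT_deutsch_iff {M : Multiset ℕ} {T : LTree} : IsWIT M (deutsch T) ↔ IsWIT M T := by
  rw [isWIT_iff, isWIT_iff, label_deutsch, labels_deutsch, forall_nodeIncreasing_deutsch_iff]

theorem subtreesL_succ (d : ℕ) (T : LTree) :
    subtreesL (d + 1) T = (subtreesL d T).map (Prod.map (· + 1) id) := by
  induction T using induction_on_children generalizing d with
  | h a cs ih =>
    simp only [subtreesL_node, List.map_cons, List.map_flatten, List.map_map]
    congr 2
    exact List.map_congr_left fun c hc => ih c hc (d + 1)

theorem countP_subtreesL_one (q : ℕ × LTree → Bool) (T : LTree) :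
    (subtreesL 1 T).countP q = (subtreesL 0 T).countP fun x => q (x.1 + 1, x.2) := by
  rw [subtreesL_succ, List.countP_map]
  rfl

def evenCount (p : LTree → Bool) (T : LTree) : ℕ :=
  (subtreesL 0 T).countP fun x => x.1 % 2 == 0 && p x.2

def oddCount (p : LTree → Bool) (T : LTree) : ℕ :=
  (subtreesL 0 T).countP fun x => x.1 % 2 == 1 && p x.2

section LevelCounts

variable (p : LTree → Bool)

theorem evenCount_eq (t : LTree) :
    evenCount p t = (if p t then 1 else 0) + (t.children.map (oddCount p)).sum := by
  obtain ⟨a, cs⟩ := t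
  rw [evenCount, subtreesL_node, List.countP_cons, List.countP_flatten, List.map_map, add_comm]
  simp only [Nat.zero_mod, beq_self_eq_true, Bool.true_and, children_node]
  congr 2
  refine List.map_congr_left fun c _ => ?_
  rw [Function.comp_apply, countP_subtreesL_one]
  exact List.countP_congr fun x _ => by
    simp only [Bool.and_eq_true, beq_iff_eq, Nat.succ_mod_two_eq_zero_iff]

theorem oddCount_eq (t : LTree) : oddCount p t = (t.children.map (evenCount p)).sum := by
  obtain ⟨a, cs⟩ := t
  rw [oddCount, subtreesL_node, List.countP_cons, List.countP_flatten, List.map_map]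
  simp only [children_node, Nat.zero_mod, Nat.reduceBEq, Bool.false_and, Bool.false_eq_true,
    if_false, add_zero]
  refine congrArg List.sum (List.map_congr_left fun c _ => ?_)
  rw [Function.comp_apply, countP_subtreesL_one]
  exact List.countP_congr fun x _ => by
    simp only [Bool.and_eq_true, beq_iff_eq, Nat.succ_mod_two_eq_one_iff]

theorem evenCount_deutsch_concat (a : ℕ) (ds : List LTree) (r : LTree) :
    evenCount p (deutsch (node a (ds ++ [r]))) + (if p (deutsch r) then 1 else 0) =
      (if p (deutsch (node a (ds ++ [r]))) then 1 else 0) + evenCount p (deutsch r) +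
        (ds.map fun d => evenCount p (deutsch d)).sum := by
  rw [evenCount_eq p (deutsch r), deutsch_concat, evenCount_eq]
  simp only [children_node, List.map_append, List.sum_append, List.map_cons, List.map_nil,
    List.sum_cons, List.sum_nil]
  rw [oddCount_eq, children_node, List.map_map, Function.comp_def]
  omega

theorem oddCount_deutsch_concat (a : ℕ) (ds : List LTree) (r : LTree) :
    oddCount p (deutsch (node a (ds ++ [r]))) =
      oddCount p (deutsch r) + (if p (node r.label (ds.map deutsch)) then 1 else 0) +
        (ds.map fun d => oddCount p (deutsch d)).sum := by
  rw [oddCount_eq p (deutsch r), deutsch_concat, oddCount_eq]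
  simp only [children_node, List.map_append, List.sum_append, List.map_cons, List.map_nil,
    List.sum_cons, List.sum_nil]
  rw [evenCount_eq, children_node, List.map_map, Function.comp_def]
  omega

end LevelCounts

theorem degCount_eq_oddLevelDegCount_deutsch {q : ℕ} (hq : 1 ≤ q) (T : LTree) :
    degCount q T = oddLevelDegCount (q - 1) (deutsch T) := by
  change T.subtrees.countP _ = oddCount (fun t => t.children.length == q - 1) (deutsch T)
  rw [countP_subtrees]
  induction T using concat_induction with
  | leaf a => simp [subtreeSum_eq, oddCount_eq, (Nat.pos_iff_ne_zero.1 hq).symm]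
  | concat a ds r ihd ihr =>
    rw [subtreeSum_concat, List.map_congr_left ihd, ihr, oddCount_deutsch_concat]
    have hlen : ds.length + 1 = q ↔ ds.length = q - 1 := by omega
    simp only [children_node, List.length_append, List.length_map, List.length_singleton,
      beq_iff_eq, hlen]
    omega

theorem evenLevelCount_eq_evenCount (T : LTree) :
    evenLevelCount T = evenCount (fun _ => true) T :=
  List.countP_congr (by simp)

theorem leafCount_eq_evenLevelCount_deutsch (T : LTree) :
    leafCount T = evenLevelCount (deutsch T) := by
  rw [evenLevelCount_eq_evenCount, leafCount, countP_subtrees]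
  induction T using concat_induction with
  | leaf a => simp [subtreeSum_eq, evenCount_eq]
  | concat a ds r ihd ihr =>
    have := evenCount_deutsch_concat (fun _ => true) a ds r
    rw [subtreeSum_concat, List.map_congr_left ihd, ihr]
    simp only [isLeaf_concat, Bool.false_eq_true, ↓reduceIte] at this ⊢
    omega

theorem spineCount_eq (k : ℕ) (T : LTree) :
    spineCount k T = (if lastSpine T = k then 1 else 0) +
      subtreeSum (fun t => t.children.dropLast.countP (lastSpine · == k)) T :=
  rfl

theorem spineCount_concat (k a : ℕ) (ds : List LTree) (r : LTree) :
    spineCount k (node a (ds ++ [r])) + (if lastSpine r = k then 1 else 0) =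
      (if 1 + lastSpine r = k then 1 else 0) + (ds.map fun d => spineCount k d).sum +
        spineCount k r := by
  simp only [spineCount_eq, subtreeSum_concat, lastSpine_concat, List.sum_map_add, children_node,
    List.dropLast_concat, List.countP_eq_sum_map_ite, beq_iff_eq]
  omega

theorem spineCount_eq_evenLevelDegCount_deutsch (k : ℕ) (T : LTree) :
    spineCount k T = evenLevelDegCount k (deutsch T) := by
  change _ = evenCount (fun t => t.children.length == k) (deutsch T)
  induction T using concat_induction with
  | leaf a => simp [spineCount_eq, subtreeSum_eq, evenCount_eq]
  | concat a ds r ihd ihr =>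
    have h₁ := spineCount_concat k a ds r
    have h₂ := evenCount_deutsch_concat (fun t => t.children.length == k) a ds r
    rw [List.map_congr_left ihd, ihr] at h₁
    simp only [length_children_deutsch, lastSpine_concat, beq_iff_eq] at h₂
    omega

theorem ystleaf_eq_elint_deutsch (T : LTree) : ystleaf T = elint (deutsch T) := by
  change T.subtrees.countP _ = evenCount (fun t => !t.isLeaf) (deutsch T)
  rw [countP_subtrees]
  induction T using concat_induction with
  | leaf a => simp [subtreeSum_eq, evenCount_eq]
  | concat a ds r ihd ihr =>
    have := evenCount_deutsch_concat (fun t => !t.isLeaf) a ds r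
    rw [subtreeSum_concat, List.map_congr_left ihd, ihr]
    simp only [isLeaf_deutsch, isLeaf_concat, children_node, List.getLast?_concat] at this ⊢
    cases hr : r.isLeaf <;> simp [hr] at this ⊢ <;> omega

def firstChildIsLeaf (t : LTree) : Bool := t.children.head?.any isLeaf

theorem oleaf_eq_countP (T : LTree) : oleaf T = T.subtrees.countP firstChildIsLeaf := by
  simp only [oleaf, sleaf, eleaf, List.countP_eq_sum_map_ite, ← List.sum_map_add]
  congr 1
  refine List.map_congr_left fun t _ => ?_
  rcases t with ⟨a, _ | ⟨c, _ | ⟨c', cs⟩⟩⟩ <;> simp [firstChildIsLeaf] <;> congr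

theorem firstChildIsLeaf_deutsch_concat (a : ℕ) (ds : List LTree) (r : LTree) :
    (if firstChildIsLeaf (node a (ds ++ [r])) then 1 else 0) +
        (if firstChildIsLeaf (deutsch r) then 1 else 0) =
      (if firstChildIsLeaf (deutsch (node a (ds ++ [r]))) then 1 else 0) +
        (if firstChildIsLeaf (node r.label (ds.map deutsch)) then 1 else 0) := by
  have hr := isLeaf_deutsch r
  rw [deutsch_concat]
  generalize deutsch r = R at hr ⊢
  obtain ⟨b, _ | ⟨c, C⟩⟩ := R <;> obtain _ | ⟨e, ds⟩ := ds <;>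
    simp_all [firstChildIsLeaf, add_comm] <;> congr

theorem oleaf_deutsch (T : LTree) : oleaf (deutsch T) = oleaf T := by
  rw [oleaf_eq_countP, oleaf_eq_countP, countP_subtrees, countP_subtrees]
  induction T using concat_induction with
  | leaf a => rw [deutsch_nil]
  | concat a ds r ihd ihr =>
    have h₁ := subtreeSum_deutsch_concat (fun t => if firstChildIsLeaf t then 1 else 0) a ds r
    have h₂ := firstChildIsLeaf_deutsch_concat a ds r
    rw [subtreeSum_concat, ← List.map_congr_left ihd, ← ihr]
    omega

end LTree

theorem deutsch_bijection_statistics_general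
    (M : Multiset ℕ) :
    ∃ Φ : {T : LTree // LTree.IsWIT M T} → {T : LTree // LTree.IsWIT M T},
      Function.Bijective Φ ∧
        ∀ T : {T : LTree // LTree.IsWIT M T},
          (∀ q, 1 ≤ q → LTree.degCount q T.1 = LTree.oddLevelDegCount (q - 1) (Φ T).1) ∧
          LTree.leafCount T.1 = LTree.evenLevelCount (Φ T).1 ∧
          (∀ k, 1 ≤ k → LTree.spineCount k T.1 = LTree.evenLevelDegCount k (Φ T).1) ∧
          LTree.ystleaf T.1 = LTree.elint (Φ T).1 ∧
          LTree.oleaf T.1 = LTree.oleaf (Φ T).1 := by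
  let Φ := LTree.deutschEquiv.subtypeEquiv fun T => (LTree.isWIT_deutsch_iff (M := M)).symm
  refine ⟨Φ, Φ.bijective, fun ⟨T, _⟩ => ⟨fun q hq => ?_, ?_, fun k _ => ?_, ?_, ?_⟩⟩
  · exact LTree.degCount_eq_oddLevelDegCount_deutsch hq T
  · exact LTree.leafCount_eq_evenLevelCount_deutsch T
  · exact LTree.spineCount_eq_evenLevelDegCount_deutsch k T
  · exact LTree.ystleaf_eq_elint_deutsch T
  · exact (LTree.oleaf_deutsch T).symm

/-- **Theorem (Deutsch's bijection on weakly increasing trees).**  There is a bijection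
`T ↦ T̂` of `𝒯_M` onto itself such that: (a) the number of nodes of degree `q ≥ 1` in `T`
equals the number of nodes of degree `q - 1` at odd levels of `T̂`; (b) the number of
leaves of `T` equals the number of nodes at even levels of `T̂`; (c) for every `k ≥ 1`
the number of youngest leaves of `T` whose path towards the root reaches the first
non-youngest node after exactly `k` edges equals the number of internal nodes of degree
`k` at even levels of `T̂`, and in particular `ystleaf T = elint T̂`; (d) `oleaf T = oleaf T̂`. -/
theorem deutsch_bijection_statistics
    (M : Multiset ℕ) (hM : ∀ x ∈ M, 0 < x) :
    ∃ Φ : {T : LTree // LTree.IsWIT M T} → {T : LTree // LTree.IsWIT M T},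
      Function.Bijective Φ ∧
        ∀ T : {T : LTree // LTree.IsWIT M T},
          (∀ q, 1 ≤ q → LTree.degCount q T.1 = LTree.oddLevelDegCount (q - 1) (Φ T).1) ∧
          LTree.leafCount T.1 = LTree.evenLevelCount (Φ T).1 ∧
          (∀ k, 1 ≤ k → LTree.spineCount k T.1 = LTree.evenLevelDegCount k (Φ T).1) ∧
          LTree.ystleaf T.1 = LTree.elint (Φ T).1 ∧
          LTree.oleaf T.1 = LTree.oleaf (Φ T).1 :=
  deutsch_bijection_statistics_general M
end

section
/- For every n ≥ 2, there exists a bijection λ from S_n onto the set of increasing binary trees on [n] such that for every π ∈ S_n and every i ∈ [n]: π_i is a peak of type 1 of π if and only if the node labeled π_i is a left leaf of λ(π); π_i is a peak of type 2 of π if and only if the node labeled π_i is a right leaf of λ(π); π_i is a double descent of π if and only if the node labeled π_i has only a left child in λ(π); and π_i is a double ascent of π if and only if the node labeled π_i has only a right child in λ(π). -/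
/-- Labeled binary trees with labels in `ℕ`. -/
inductive LBT : Type where
  | nil : LBT
  | node : ℕ → LBT → LBT → LBT

namespace LBT

/-- The list of all subtrees rooted at actual nodes. -/
def subtrees : LBT → List LBT
  | nil => []
  | node a l r => node a l r :: (l.subtrees ++ r.subtrees)

/-- The label of the root (`0` for the empty tree). -/
def labelOf : LBT → ℕ
  | nil => 0
  | node a _ _ => a

/-- The left subtree. -/
def left : LBT → LBT
  | nil => nil
  | node _ l _ => l

/-- The right subtree. -/
def right : LBT → LBT
  | nil => nil
  | node _ _ r => r

/-- Whether the tree is empty. -/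
def isNil : LBT → Bool
  | nil => true
  | node _ _ _ => false

/-- Whether the tree is a single node (a leaf). -/
def isLeafB : LBT → Bool
  | node _ nil nil => true
  | _ => false

/-- The multiset of labels of all nodes. -/
def labels (B : LBT) : Multiset ℕ := (B.subtrees.map labelOf : List ℕ)

/-- `B` is a weakly increasing binary tree on the multiset `M`: the labels form the
multiset `M` and labels weakly increase along every path from the root. -/
def IsWIBT (M : Multiset ℕ) (B : LBT) : Prop :=
  B.labels = M ∧ ∀ t ∈ B.subtrees,
    (t.left ≠ nil → t.labelOf ≤ t.left.labelOf) ∧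
    (t.right ≠ nil → t.labelOf ≤ t.right.labelOf)

/-- `B` is an increasing binary tree on `[n]`: the labels form the set `{1, …, n}`
and labels strictly increase along every path from the root. -/
def IsIncBT (n : ℕ) (B : LBT) : Prop :=
  B.labels = Multiset.map (· + 1) (Multiset.range n) ∧ ∀ t ∈ B.subtrees,
    (t.left ≠ nil → t.labelOf < t.left.labelOf) ∧
    (t.right ≠ nil → t.labelOf < t.right.labelOf)

/-- The node labeled `x` is a left leaf of `B`. -/
def HasLeftLeaf (B : LBT) (x : ℕ) : Prop := ∃ t ∈ B.subtrees, t.left = node x nil nil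

/-- The node labeled `x` is a right leaf of `B`. -/
def HasRightLeaf (B : LBT) (x : ℕ) : Prop := ∃ t ∈ B.subtrees, t.right = node x nil nil

/-- The node labeled `x` has only a left child in `B`. -/
def HasOnlyLeftChild (B : LBT) (x : ℕ) : Prop :=
  ∃ t ∈ B.subtrees, t.labelOf = x ∧ t.left ≠ nil ∧ t.right = nil ∧ t ≠ nil

/-- The node labeled `x` has only a right child in `B`. -/
def HasOnlyRightChild (B : LBT) (x : ℕ) : Prop :=
  ∃ t ∈ B.subtrees, t.labelOf = x ∧ t.left = nil ∧ t.right ≠ nil ∧ t ≠ nil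

end LBT

namespace PermWord

/-- The word of a permutation `π` of `[n]`, with the boundary convention
`π₀ = π_{n+1} = 0`: `wordOf n π i = π_i` for `1 ≤ i ≤ n` and `0` otherwise. -/
def wordOf (n : ℕ) (π : Equiv.Perm (Fin n)) (i : ℕ) : ℕ :=
  if h : 1 ≤ i ∧ i ≤ n then ((π ⟨i - 1, by omega⟩ : Fin n) : ℕ) + 1 else 0

/-- `i` is a peak of `π`: `π_{i-1} < π_i > π_{i+1}`. -/
def IsPeak (n : ℕ) (π : Equiv.Perm (Fin n)) (i : ℕ) : Prop :=
  wordOf n π (i - 1) < wordOf n π i ∧ wordOf n π (i + 1) < wordOf n π i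

instance (n : ℕ) (π : Equiv.Perm (Fin n)) (i : ℕ) : Decidable (IsPeak n π i) := by
  unfold IsPeak; infer_instance

/-- `i` is a peak of type 1 of `π`: a peak with `π_{i-1} ≤ π_{i+1}`. -/
def IsPeak1 (n : ℕ) (π : Equiv.Perm (Fin n)) (i : ℕ) : Prop :=
  IsPeak n π i ∧ wordOf n π (i - 1) ≤ wordOf n π (i + 1)

instance (n : ℕ) (π : Equiv.Perm (Fin n)) (i : ℕ) : Decidable (IsPeak1 n π i) := by
  unfold IsPeak1; infer_instance

/-- `i` is a peak of type 2 of `π`: a peak with `π_{i-1} > π_{i+1}`. -/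
def IsPeak2 (n : ℕ) (π : Equiv.Perm (Fin n)) (i : ℕ) : Prop :=
  IsPeak n π i ∧ wordOf n π (i + 1) < wordOf n π (i - 1)

instance (n : ℕ) (π : Equiv.Perm (Fin n)) (i : ℕ) : Decidable (IsPeak2 n π i) := by
  unfold IsPeak2; infer_instance

/-- `i` is a double descent of `π`: `π_{i-1} > π_i > π_{i+1}`. -/
def IsDD (n : ℕ) (π : Equiv.Perm (Fin n)) (i : ℕ) : Prop :=
  wordOf n π i < wordOf n π (i - 1) ∧ wordOf n π (i + 1) < wordOf n π i

instance (n : ℕ) (π : Equiv.Perm (Fin n)) (i : ℕ) : Decidable (IsDD n π i) := by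
  unfold IsDD; infer_instance

/-- `i` is a double ascent of `π`: `π_{i-1} < π_i < π_{i+1}`. -/
def IsDA (n : ℕ) (π : Equiv.Perm (Fin n)) (i : ℕ) : Prop :=
  wordOf n π (i - 1) < wordOf n π i ∧ wordOf n π i < wordOf n π (i + 1)

instance (n : ℕ) (π : Equiv.Perm (Fin n)) (i : ℕ) : Decidable (IsDA n π i) := by
  unfold IsDA; infer_instance

/-- The number of peaks of `π`. -/
def pk (n : ℕ) (π : Equiv.Perm (Fin n)) : ℕ :=
  ((Finset.Icc 1 n).filter (IsPeak n π)).card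

/-- The number of type-1 peaks of `π`. -/
def pk1 (n : ℕ) (π : Equiv.Perm (Fin n)) : ℕ :=
  ((Finset.Icc 1 n).filter (IsPeak1 n π)).card

/-- The number of type-2 peaks of `π`. -/
def pk2 (n : ℕ) (π : Equiv.Perm (Fin n)) : ℕ :=
  ((Finset.Icc 1 n).filter (IsPeak2 n π)).card

/-- The number of double descents of `π`. -/
def dd (n : ℕ) (π : Equiv.Perm (Fin n)) : ℕ :=
  ((Finset.Icc 1 n).filter (IsDD n π)).card

/-- The number of double ascents of `π`. -/
def da (n : ℕ) (π : Equiv.Perm (Fin n)) : ℕ :=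
  ((Finset.Icc 1 n).filter (IsDA n π)).card

end PermWord

/-!
The bijection sends a permutation word `w` to its Cartesian tree: the minimal letter `m` of
`w = u m v` is the root, and the trees of `u` and `v` are its left and right subtrees. An increasing
binary tree is recovered from its inorder word, which is what makes the map bijective.

In the tree of `w`, a letter `x` with neighbours `p` and `q` (`0` beyond the ends) has a left
child iff `x < p` and a right child iff `x < q`. A leaf hangs below the larger of `p` and `q`, so
it is a left child exactly when `p < q`. Both facts are proved by induction on the tree, for a
tree whose inorder word sits inside a longer word between the letters `a` and `b`.
-/

namespace List

variable {α : Type*}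

theorem append_cons_eq_append_cons_iff {l r u v : List α} {m x : α} :
    l ++ m :: r = u ++ x :: v ↔ (l = u ∧ m = x ∧ r = v) ∨
      (∃ w, l = u ++ x :: w ∧ v = w ++ m :: r) ∨ (∃ w, u = l ++ m :: w ∧ r = w ++ x :: v) := by
  rw [List.append_eq_append_iff]
  constructor
  · rintro (⟨_ | ⟨y, w⟩, rfl, h⟩ | ⟨_ | ⟨y, w⟩, rfl, h⟩) <;> simp_all
  · rintro (⟨rfl, rfl, rfl⟩ | ⟨w, rfl, rfl⟩ | ⟨w, rfl, rfl⟩) <;> simp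

theorem getLastD_mem {l : List α} (h : l ≠ []) (a : α) : l.getLastD a ∈ l := by
  rw [getLastD_eq_getLast?, getLast?_eq_some_getLast h]
  exact getLast_mem h

theorem headD_mem {l : List α} (h : l ≠ []) (a : α) : l.headD a ∈ l := by
  cases l with
  | nil => exact absurd rfl h
  | cons y l => exact mem_cons_self

@[simp]
theorem getLastD_append_cons (l w : List α) (m a : α) :
    (l ++ m :: w).getLastD a = w.getLastD m := by
  simp [getLastD_eq_getLast?, getLast?_append, getLast?_cons]

@[simp]
theorem headD_append_cons (w r : List α) (m b : α) : (w ++ m :: r).headD b = w.headD m := by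
  cases w <;> rfl

end List

namespace LBT

variable {B L R : LBT} {a b m p q x : ℕ}

def inorder : LBT → List ℕ
  | nil => []
  | node a l r => inorder l ++ a :: inorder r

def IsIncreasing (B : LBT) : Prop :=
  ∀ t ∈ B.subtrees, (t.left ≠ nil → t.labelOf < t.left.labelOf) ∧
    (t.right ≠ nil → t.labelOf < t.right.labelOf)

@[simp]
lemma inorder_nil : inorder nil = [] := rfl

@[simp]
lemma inorder_node (a : ℕ) (L R : LBT) : inorder (node a L R) = inorder L ++ a :: inorder R := rfl

@[simp]
lemma inorder_eq_nil_iff : inorder B = [] ↔ B = nil := by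
  cases B <;> simp

lemma labels_eq_inorder (B : LBT) : B.labels = ↑(inorder B) := by
  induction B with
  | nil => rfl
  | node a L R ihL ihR =>
    simp only [labels, subtrees, List.map_cons, List.map_append] at ihL ihR ⊢
    rw [← Multiset.cons_coe, ← Multiset.coe_add, ihL, ihR, Multiset.coe_add, Multiset.cons_coe]
    exact Multiset.coe_eq_coe.2 List.perm_middle.symm

lemma inorder_subset_of_mem_subtrees {t : LBT} (ht : t ∈ B.subtrees) :
    inorder t ⊆ inorder B := by
  induction B with
  | nil => simp [subtrees] at ht
  | node a L R ihL ihR =>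
    simp only [subtrees, List.mem_cons, List.mem_append] at ht
    rcases ht with rfl | ht | ht
    · exact List.Subset.refl _
    · exact fun y hy => by simp [ihL ht hy]
    · exact fun y hy => by simp [ihR ht hy]

lemma isIncreasing_nil : IsIncreasing nil := by simp [IsIncreasing, subtrees]

lemma isIncreasing_node :
    IsIncreasing (node a L R) ↔ (L ≠ nil → a < L.labelOf) ∧ (R ≠ nil → a < R.labelOf) ∧
      IsIncreasing L ∧ IsIncreasing R := by
  simp only [IsIncreasing, subtrees, List.forall_mem_cons, List.forall_mem_append]
  simp only [left, right, labelOf]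
  tauto

lemma IsIncreasing.labelOf_le (hB : IsIncreasing B) :
    ∀ y ∈ inorder B, B.labelOf ≤ y := by
  induction B with
  | nil => simp
  | node a L R ihL ihR =>
    obtain ⟨hL, hR, incL, incR⟩ := isIncreasing_node.1 hB
    intro y hy
    simp only [inorder_node, List.mem_append, List.mem_cons] at hy
    rcases hy with hy | rfl | hy
    · exact (hL (by rintro rfl; simp at hy)).le.trans (ihL incL y hy)
    · exact le_rfl
    · exact (hR (by rintro rfl; simp at hy)).le.trans (ihR incR y hy)

lemma labelOf_mem_inorder (hB : B ≠ nil) : B.labelOf ∈ inorder B := by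
  cases B <;> simp_all [labelOf]

lemma isIncreasing_node_iff :
    IsIncreasing (node a L R) ↔ (∀ y ∈ inorder L, a < y) ∧ (∀ y ∈ inorder R, a < y) ∧
      IsIncreasing L ∧ IsIncreasing R := by
  rw [isIncreasing_node]
  constructor
  · rintro ⟨hL, hR, incL, incR⟩
    exact ⟨fun y hy => (hL (by rintro rfl; simp at hy)).trans_le (incL.labelOf_le y hy),
      fun y hy => (hR (by rintro rfl; simp at hy)).trans_le (incR.labelOf_le y hy), incL, incR⟩
  · rintro ⟨hL, hR, incL, incR⟩
    exact ⟨fun h => hL _ (labelOf_mem_inorder h), fun h => hR _ (labelOf_mem_inorder h),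
      incL, incR⟩

theorem exists_isIncreasing_inorder_eq (l : List ℕ) (hl : l.Nodup) :
    ∃ B, IsIncreasing B ∧ inorder B = l := by
  induction h : l.length using Nat.strong_induction_on generalizing l with
  | _ k ih =>
  subst h
  cases hm : l.min? with
  | none => exact ⟨nil, isIncreasing_nil, (List.min?_eq_none_iff.1 hm).symm⟩
  | some m =>
  obtain ⟨hm_mem, hm_le⟩ := List.min?_eq_some_iff.1 hm
  obtain ⟨u, v, rfl⟩ := List.append_of_mem hm_mem
  obtain ⟨⟨hmu, hmv⟩, huv⟩ := by simpa using List.nodup_middle.1 hl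
  have hlt : ∀ y ∈ u ++ m :: v, y ≠ m → m < y := fun y hy hne => (hm_le y hy).lt_of_ne' hne
  obtain ⟨L, incL, rfl⟩ := ih _ (by simp only [List.length_append, List.length_cons]; omega) u
    huv.of_append_left rfl
  obtain ⟨R, incR, rfl⟩ := ih _ (by simp only [List.length_append, List.length_cons]; omega) v
    huv.of_append_right rfl
  refine ⟨node m L R, isIncreasing_node_iff.2 ⟨?_, ?_, incL, incR⟩, rfl⟩
  · exact fun y hy => hlt y (by simp [hy]) (by rintro rfl; exact hmu hy)
  · exact fun y hy => hlt y (by simp [hy]) (by rintro rfl; exact hmv hy)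

theorem IsIncreasing.eq_of_inorder_eq {B' : LBT} (hB : IsIncreasing B) (hB' : IsIncreasing B')
    (h : inorder B = inorder B') : B = B' := by
  induction B generalizing B' with
  | nil => simpa [eq_comm] using h
  | node m L R ihL ihR =>
    cases B' with
    | nil => simp at h
    | node m' L' R' =>
      obtain ⟨hL, hR, incL, incR⟩ := isIncreasing_node_iff.1 hB
      obtain ⟨hL', hR', incL', incR'⟩ := isIncreasing_node_iff.1 hB'
      have hmm' : m = m' :=
        le_antisymm (hB.labelOf_le m' (h ▸ by simp)) (hB'.labelOf_le m (h ▸ by simp))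
      subst hmm'
      rcases List.append_cons_eq_append_cons_iff.1 h with ⟨h₁, -, h₂⟩ | ⟨w, h₁, -⟩ | ⟨w, h₁, -⟩
      · rw [ihL incL incL' h₁, ihR incR incR' h₂]
      · exact absurd (hL m (by simp [h₁])) (lt_irrefl m)
      · exact absurd (hL' m (by simp [h₁])) (lt_irrefl m)

lemma hasLeftLeaf_node :
    HasLeftLeaf (node m L R) x ↔ L = node x nil nil ∨ HasLeftLeaf L x ∨ HasLeftLeaf R x := by
  simp [HasLeftLeaf, subtrees, or_and_right, exists_or, left]

lemma hasRightLeaf_node :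
    HasRightLeaf (node m L R) x ↔ R = node x nil nil ∨ HasRightLeaf L x ∨ HasRightLeaf R x := by
  simp [HasRightLeaf, subtrees, or_and_right, exists_or, right]

lemma hasOnlyLeftChild_node : HasOnlyLeftChild (node m L R) x ↔
    (m = x ∧ L ≠ nil ∧ R = nil) ∨ HasOnlyLeftChild L x ∨ HasOnlyLeftChild R x := by
  simp [HasOnlyLeftChild, subtrees, or_and_right, exists_or, left, right, labelOf]

lemma hasOnlyRightChild_node : HasOnlyRightChild (node m L R) x ↔
    (m = x ∧ L = nil ∧ R ≠ nil) ∨ HasOnlyRightChild L x ∨ HasOnlyRightChild R x := by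
  simp [HasOnlyRightChild, subtrees, or_and_right, exists_or, left, right, labelOf]

lemma mem_inorder_of_hasLeftLeaf (h : HasLeftLeaf B x) : x ∈ inorder B := by
  obtain ⟨t, ht, hx⟩ := h
  cases t with
  | nil => simp [left] at hx
  | node c L R => exact inorder_subset_of_mem_subtrees ht (by simp_all [left])

lemma mem_inorder_of_hasRightLeaf (h : HasRightLeaf B x) : x ∈ inorder B := by
  obtain ⟨t, ht, hx⟩ := h
  cases t with
  | nil => simp [right] at hx
  | node c L R => exact inorder_subset_of_mem_subtrees ht (by simp_all [right])

lemma mem_inorder_of_hasOnlyLeftChild (h : HasOnlyLeftChild B x) : x ∈ inorder B := by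
  obtain ⟨t, ht, rfl, -, -, hne⟩ := h
  exact inorder_subset_of_mem_subtrees ht (labelOf_mem_inorder hne)

lemma mem_inorder_of_hasOnlyRightChild (h : HasOnlyRightChild B x) : x ∈ inorder B := by
  obtain ⟨t, ht, rfl, -, -, hne⟩ := h
  exact inorder_subset_of_mem_subtrees ht (labelOf_mem_inorder hne)

/-- The shape of the node `x` of `B` predicted by the neighbours `p` and `q` of `x`, when the
inorder word of `B` sits between the letters `a` and `b` of a longer word (which stand in for
missing neighbours). A lone node `x` then hangs below the larger of `a` and `b`. -/
def ShapeAt (B : LBT) (a b p x q : ℕ) : Prop :=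
  ((p < x ∧ q < x) ∧ p ≤ q ↔ HasLeftLeaf B x ∨ (B = node x nil nil ∧ a ≤ b)) ∧
  ((p < x ∧ q < x) ∧ q < p ↔ HasRightLeaf B x ∨ (B = node x nil nil ∧ b < a)) ∧
  (x < p ∧ q < x ↔ HasOnlyLeftChild B x) ∧
  (p < x ∧ x < q ↔ HasOnlyRightChild B x)

lemma shapeAt_root (ha : a < m) (hb : b < m) (hL : ∀ y ∈ inorder L, m < y)
    (hR : ∀ y ∈ inorder R, m < y) :
    ShapeAt (node m L R) a b ((inorder L).getLastD a) m ((inorder R).headD b) := by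
  have hmL : m ∉ inorder L := fun h => (hL m h).false
  have hmR : m ∉ inorder R := fun h => (hR m h).false
  have hp : (L = nil ∧ (inorder L).getLastD a = a) ∨ (L ≠ nil ∧ m < (inorder L).getLastD a) := by
    rcases eq_or_ne L nil with rfl | hLne
    · simp
    · exact .inr ⟨hLne, hL _ (List.getLastD_mem (by simpa using hLne) a)⟩
  have hq : (R = nil ∧ (inorder R).headD b = b) ∨ (R ≠ nil ∧ m < (inorder R).headD b) := by
    rcases eq_or_ne R nil with rfl | hRne
    · simp
    · exact .inr ⟨hRne, hR _ (List.headD_mem (by simpa using hRne) b)⟩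
  have hLm : L ≠ node m nil nil := by rintro rfl; simp at hmL
  have hRm : R ≠ node m nil nil := by rintro rfl; simp at hmR
  simp only [ShapeAt, hasLeftLeaf_node, hasRightLeaf_node, hasOnlyLeftChild_node,
    hasOnlyRightChild_node, mt mem_inorder_of_hasLeftLeaf hmL, mt mem_inorder_of_hasLeftLeaf hmR,
    mt mem_inorder_of_hasRightLeaf hmL, mt mem_inorder_of_hasRightLeaf hmR,
    mt mem_inorder_of_hasOnlyLeftChild hmL, mt mem_inorder_of_hasOnlyLeftChild hmR,
    mt mem_inorder_of_hasOnlyRightChild hmL, mt mem_inorder_of_hasOnlyRightChild hmR,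
    hLm, hRm, node.injEq, true_and, or_false, false_or]
  generalize (inorder L).getLastD a = p at hp
  generalize (inorder R).headD b = q at hq
  rcases hp with ⟨rfl, rfl⟩ | ⟨hLne, hp⟩ <;> rcases hq with ⟨rfl, rfl⟩ | ⟨hRne, hq⟩ <;>
    simp only [ne_eq, not_true_eq_false, not_false_eq_true, true_and, and_true, false_and,
      iff_false, not_and, not_lt, *] <;>
    omega

lemma ShapeAt.node_left (h : ShapeAt L a m p x q) (ham : a < m) (hxm : x ≠ m)
    (hxR : x ∉ inorder R) : ShapeAt (node m L R) a b p x q := by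
  obtain ⟨h₁, h₂, h₃, h₄⟩ := h
  have hRx : R ≠ node x nil nil := by rintro rfl; simp at hxR
  simp only [ShapeAt, hasLeftLeaf_node, hasRightLeaf_node, hasOnlyLeftChild_node,
    hasOnlyRightChild_node, mt mem_inorder_of_hasLeftLeaf hxR, mt mem_inorder_of_hasRightLeaf hxR,
    mt mem_inorder_of_hasOnlyLeftChild hxR, mt mem_inorder_of_hasOnlyRightChild hxR,
    node.injEq, hxm.symm, hRx, ham.le, ham.not_gt, false_and, and_false, and_true, or_false,
    false_or] at h₁ h₂ ⊢
  exact ⟨h₁.trans or_comm, h₂, h₃, h₄⟩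

lemma ShapeAt.node_right (h : ShapeAt R m b p x q) (hbm : b < m) (hxm : x ≠ m)
    (hxL : x ∉ inorder L) : ShapeAt (node m L R) a b p x q := by
  obtain ⟨h₁, h₂, h₃, h₄⟩ := h
  have hLx : L ≠ node x nil nil := by rintro rfl; simp at hxL
  simp only [ShapeAt, hasLeftLeaf_node, hasRightLeaf_node, hasOnlyLeftChild_node,
    hasOnlyRightChild_node, mt mem_inorder_of_hasLeftLeaf hxL, mt mem_inorder_of_hasRightLeaf hxL,
    mt mem_inorder_of_hasOnlyLeftChild hxL, mt mem_inorder_of_hasOnlyRightChild hxL,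
    node.injEq, hxm.symm, hLx, hbm, hbm.not_ge, false_and, and_false, and_true, or_false,
    false_or] at h₁ h₂ ⊢
  exact ⟨h₁, h₂.trans or_comm, h₃, h₄⟩

theorem IsIncreasing.shapeAt (hB : IsIncreasing B) (hnd : (inorder B).Nodup)
    (ha : ∀ y ∈ inorder B, a < y) (hb : ∀ y ∈ inorder B, b < y) {u v : List ℕ}
    (h : inorder B = u ++ x :: v) : ShapeAt B a b (u.getLastD a) x (v.headD b) := by
  induction B generalizing a b u v with
  | nil => simp at h
  | node m L R ihL ihR =>
    obtain ⟨hL, hR, incL, incR⟩ := isIncreasing_node_iff.1 hB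
    rw [inorder_node] at hnd ha hb h
    have hndL := hnd.of_append_left
    have hndR := (List.nodup_cons.1 hnd.of_append_right).2
    rcases List.append_cons_eq_append_cons_iff.1 h with ⟨rfl, rfl, rfl⟩ | ⟨w, hLw, rfl⟩ |
      ⟨w, rfl, hRw⟩
    · exact shapeAt_root (ha m (by simp)) (hb m (by simp)) hL hR
    · have hxL : x ∈ inorder L := by simp [hLw]
      rw [List.headD_append_cons]
      refine (ihL incL hndL (fun y hy => ha y (by simp [hy])) hL hLw).node_left
        (ha m (by simp)) (hL x hxL).ne' fun hxR => ?_
      exact List.disjoint_of_nodup_append hnd hxL (List.mem_cons_of_mem m hxR)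
    · have hxR : x ∈ inorder R := by simp [hRw]
      rw [List.getLastD_append_cons]
      refine (ihR incR hndR hR (fun y hy => hb y (by simp [hy])) hRw).node_right
        (hb m (by simp)) (hR x hxR).ne' fun hxL => ?_
      exact List.disjoint_of_nodup_append hnd hxL (List.mem_cons_of_mem m hxR)

end LBT

namespace PermWord

variable {n : ℕ} {π : Equiv.Perm (Fin n)}

def wordList (n : ℕ) (π : Equiv.Perm (Fin n)) : List ℕ := List.ofFn fun i => (π i : ℕ) + 1

lemma wordList_injective : Function.Injective (wordList n) := fun π σ h =>
  Equiv.ext fun i => Fin.ext <| by simpa [wordList] using congrFun (List.ofFn_injective h) i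

lemma nodup_wordList : (wordList n π).Nodup :=
  List.nodup_ofFn.2 fun i j h => π.injective <| Fin.ext <| by simpa using h

lemma nodup_map_succ_range (n : ℕ) : (Multiset.map (· + 1) (Multiset.range n)).Nodup :=
  (Multiset.nodup_range n).map (add_left_injective 1)

lemma coe_wordList : (wordList n π : Multiset ℕ) = Multiset.map (· + 1) (Multiset.range n) := by
  refine (Multiset.Nodup.ext (Multiset.coe_nodup.2 nodup_wordList) (nodup_map_succ_range n)).2
    fun y => ?_
  simp only [Multiset.mem_coe, wordList, List.mem_ofFn, Multiset.mem_map, Multiset.mem_range]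
  constructor
  · rintro ⟨i, rfl⟩
    exact ⟨π i, (π i).isLt, rfl⟩
  · rintro ⟨k, hk, rfl⟩
    exact ⟨π.symm ⟨k, hk⟩, by simp⟩

lemma exists_wordList_eq {l : List ℕ}
    (hl : (l : Multiset ℕ) = Multiset.map (· + 1) (Multiset.range n)) :
    ∃ π : Equiv.Perm (Fin n), wordList n π = l := by
  have hnd : l.Nodup := Multiset.coe_nodup.1 (hl ▸ nodup_map_succ_range n)
  have hlen : l.length = n := by simpa using congrArg Multiset.card hl
  have hmem : ∀ y ∈ l, 1 ≤ y ∧ y ≤ n := fun y hy => by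
    obtain ⟨k, hk, rfl⟩ := Multiset.mem_map.1 (hl ▸ Multiset.mem_coe.2 hy)
    simpa [Nat.succ_le_iff] using hk
  have hget (i : Fin n) : 1 ≤ l[i.1]'(hlen ▸ i.2) ∧ l[i.1]'(hlen ▸ i.2) ≤ n :=
    hmem _ (List.getElem_mem _)
  let f (i : Fin n) : Fin n := ⟨l[i.1]'(hlen ▸ i.2) - 1, by have := hget i; omega⟩
  have hf : Function.Injective f := fun i j hij => by
    have := hget i; have := hget j
    exact Fin.ext <| hnd.getElem_inj_iff.1 <| by simp only [f, Fin.mk.injEq] at hij; omega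
  refine ⟨Equiv.ofBijective f (Finite.injective_iff_bijective.1 hf),
    List.ext_getElem (by simp [wordList, hlen]) fun i h₁ h₂ => ?_⟩
  have := hmem _ (List.getElem_mem h₂)
  simp only [wordList, List.getElem_ofFn, Equiv.ofBijective_apply, f]
  omega

lemma wordOf_zero : wordOf n π 0 = 0 := by simp [wordOf]

lemma wordOf_succ (k : ℕ) : wordOf n π (k + 1) = ((wordList n π)[k]?).getD 0 := by
  by_cases hk : k < n <;> simp [wordOf, wordList, hk]

lemma getLastD_take_wordList {k : ℕ} (hk : k ≤ n) :
    ((wordList n π).take k).getLastD 0 = wordOf n π k := by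
  cases k with
  | zero => simp [wordOf_zero]
  | succ k =>
    rw [wordOf_succ, List.getLastD_eq_getLast?, List.getLast?_take]
    simp [List.getElem?_eq_getElem (show k < (wordList n π).length by simp [wordList]; omega)]

lemma headD_drop_wordList (k : ℕ) :
    ((wordList n π).drop k).headD 0 = wordOf n π (k + 1) := by
  rw [wordOf_succ, List.headD_eq_head?, List.head?_drop]

theorem statistics_of_inorder_eq_wordList {B : LBT} (hB : B.IsIncreasing)
    (hw : B.inorder = wordList n π) (hn : 2 ≤ n) {i : ℕ} (hi : i ∈ Finset.Icc 1 n) :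
    (IsPeak1 n π i ↔ B.HasLeftLeaf (wordOf n π i)) ∧
    (IsPeak2 n π i ↔ B.HasRightLeaf (wordOf n π i)) ∧
    (IsDD n π i ↔ B.HasOnlyLeftChild (wordOf n π i)) ∧
    (IsDA n π i ↔ B.HasOnlyRightChild (wordOf n π i)) := by
  obtain ⟨k, rfl⟩ : ∃ k, i = k + 1 := ⟨i - 1, by simp at hi; omega⟩
  have hk : k < (wordList n π).length := by simp at hi; simp [wordList]; omega
  have hsplit : wordList n π =
      (wordList n π).take k ++ wordOf n π (k + 1) :: (wordList n π).drop (k + 1) := by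
    rw [wordOf_succ, List.getElem?_eq_getElem hk, Option.getD_some,
      ← List.drop_eq_getElem_cons hk, List.take_append_drop]
  have hpos : ∀ y ∈ B.inorder, 0 < y := by simp [hw, wordList]
  have hshape := hB.shapeAt (hw ▸ nodup_wordList) hpos hpos (hw.trans hsplit)
  rw [getLastD_take_wordList (by simp [wordList] at hk; omega), headD_drop_wordList] at hshape
  have hleaf : B ≠ .node (wordOf n π (k + 1)) .nil .nil := fun h => by
    have := congrArg List.length hw
    simp [h, wordList] at this
    omega
  simpa [LBT.ShapeAt, IsPeak1, IsPeak2, IsPeak, IsDD, IsDA, hleaf] using hshape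

end PermWord

/-- **Theorem (the bijection `λ` from permutations to increasing binary trees).**
For `n ≥ 2` there is a bijection `λ` from `S_n` onto the increasing binary trees on
`[n]` such that, for every `π` and `i ∈ [n]`: `π_i` is a type-1 peak iff the node
labeled `π_i` is a left leaf of `λ(π)`; `π_i` is a type-2 peak iff it is a right leaf;
`π_i` is a double descent iff the node labeled `π_i` has only a left child; and `π_i`
is a double ascent iff it has only a right child. -/
theorem perm_to_increasing_binary_tree
    (n : ℕ) (hn : 2 ≤ n) :
    ∃ lam : Equiv.Perm (Fin n) → {B : LBT // LBT.IsIncBT n B},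
      Function.Bijective lam ∧
        ∀ π : Equiv.Perm (Fin n), ∀ i ∈ Finset.Icc 1 n,
          (PermWord.IsPeak1 n π i ↔ LBT.HasLeftLeaf (lam π).1 (PermWord.wordOf n π i)) ∧
          (PermWord.IsPeak2 n π i ↔ LBT.HasRightLeaf (lam π).1 (PermWord.wordOf n π i)) ∧
          (PermWord.IsDD n π i ↔ LBT.HasOnlyLeftChild (lam π).1 (PermWord.wordOf n π i)) ∧
          (PermWord.IsDA n π i ↔ LBT.HasOnlyRightChild (lam π).1 (PermWord.wordOf n π i)) := by
  choose T hinc hword using fun π : Equiv.Perm (Fin n) =>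
    LBT.exists_isIncreasing_inorder_eq _ (PermWord.nodup_wordList (π := π))
  have hT (π : Equiv.Perm (Fin n)) : LBT.IsIncBT n (T π) :=
    ⟨by rw [LBT.labels_eq_inorder, hword, PermWord.coe_wordList], hinc π⟩
  refine ⟨fun π => ⟨T π, hT π⟩, ⟨fun π σ h => ?_, fun ⟨B, hB⟩ => ?_⟩, fun π i hi =>
    PermWord.statistics_of_inorder_eq_wordList (hinc π) (hword π) hn hi⟩
  · exact PermWord.wordList_injective <| by rw [← hword, ← hword, Subtype.mk.inj h]
  · obtain ⟨π, hπ⟩ := PermWord.exists_wordList_eq (hB.1 ▸ (LBT.labels_eq_inorder B).symm)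
    exact ⟨π, Subtype.ext <| (hinc π).eq_of_inorder_eq hB.2 ((hword π).trans hπ)⟩
end

section
/- For every n ≥ 1, the 8-tuples of statistics (mnd, mna, des, asc, ldr, rar, lmin, rmin) and (mna, mnd, asc, des, rar, ldr, rmin, lmin) are equidistributed over S_n(312): for every 8-tuple of nonnegative integers (a_1,…,a_8), the number of π ∈ S_n(312) with (mnd, mna, des, asc, ldr, rar, lmin, rmin)(π) = (a_1,…,a_8) equals the number of π ∈ S_n(312) with (mna, mnd, asc, des, rar, ldr, rmin, lmin)(π) = (a_1,…,a_8). -/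
/-!
A 312-avoiding word with letters `c, c+1, …` factors as `u c v` with every letter of `u` below
every letter of `v`, so these words are exactly the in-order readings `treeWord t c` of binary
trees `t`, labelled in preorder. All eight statistics of a word only depend on its Cartesian tree,
that is, on which windows `[i, j]` attain their minimum at `i` and which at `j`. The reverse of
`treeWord t.mirror` has the same Cartesian tree as `treeWord t`, and reversing a word exchanges
`mnd ↔ mna`, `des ↔ asc`, `ldr ↔ rar` and `lmin ↔ rmin`; so `t ↦ t.mirror` carries the first
8-tuple to the second.
-/

namespace PermWord

/-- `π` is 312-avoiding: there are no indices `i < j < k` in `[n]` with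
`π_i > π_k > π_j`. -/
def Avoids312 (n : ℕ) (π : Equiv.Perm (Fin n)) : Prop :=
  ∀ i ∈ Finset.Icc 1 n, ∀ j ∈ Finset.Icc 1 n, ∀ k ∈ Finset.Icc 1 n,
    i < j → j < k → ¬(wordOf n π k < wordOf n π i ∧ wordOf n π j < wordOf n π k)

instance (n : ℕ) (π : Equiv.Perm (Fin n)) : Decidable (Avoids312 n π) := by
  unfold Avoids312; infer_instance

/-- The descent set of `π`. -/
def DES (n : ℕ) (π : Equiv.Perm (Fin n)) : Finset ℕ :=
  (Finset.Icc 1 (n - 1)).filter (fun i => wordOf n π (i + 1) < wordOf n π i)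

/-- The ascent set of `π`. -/
def ASC (n : ℕ) (π : Equiv.Perm (Fin n)) : Finset ℕ :=
  (Finset.Icc 1 (n - 1)).filter (fun i => wordOf n π i < wordOf n π (i + 1))

/-- `π_i` is a left-to-right minimum of `π`. -/
def IsLRMin (n : ℕ) (π : Equiv.Perm (Fin n)) (i : ℕ) : Prop :=
  ∀ j ∈ Finset.Icc 1 (i - 1), wordOf n π i < wordOf n π j

instance (n : ℕ) (π : Equiv.Perm (Fin n)) (i : ℕ) : Decidable (IsLRMin n π i) := by
  unfold IsLRMin; infer_instance

/-- `π_i` is a right-to-left minimum of `π`. -/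
def IsRLMin (n : ℕ) (π : Equiv.Perm (Fin n)) (i : ℕ) : Prop :=
  ∀ j ∈ Finset.Icc (i + 1) n, wordOf n π i < wordOf n π j

instance (n : ℕ) (π : Equiv.Perm (Fin n)) (i : ℕ) : Decidable (IsRLMin n π i) := by
  unfold IsRLMin; infer_instance

/-- The number of left-to-right minima of `π`. -/
def lmin (n : ℕ) (π : Equiv.Perm (Fin n)) : ℕ :=
  ((Finset.Icc 1 n).filter (IsLRMin n π)).card

/-- The number of right-to-left minima of `π`. -/
def rmin (n : ℕ) (π : Equiv.Perm (Fin n)) : ℕ :=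
  ((Finset.Icc 1 n).filter (IsRLMin n π)).card

/-- The number of descents of `π`. -/
def des (n : ℕ) (π : Equiv.Perm (Fin n)) : ℕ := (DES n π).card

/-- The number of ascents of `π`. -/
def asc (n : ℕ) (π : Equiv.Perm (Fin n)) : ℕ := (ASC n π).card

/-- `S` contains no two consecutive integers. -/
def NonOverlapping (S : Finset ℕ) : Prop := ∀ i ∈ S, i + 1 ∉ S

instance (S : Finset ℕ) : Decidable (NonOverlapping S) := by
  unfold NonOverlapping; infer_instance

/-- The maximum number of non-overlapping descents of `π`: the maximum size of a
subset of the descent set containing no two consecutive integers. -/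
def mnd (n : ℕ) (π : Equiv.Perm (Fin n)) : ℕ :=
  ((DES n π).powerset.filter NonOverlapping).sup Finset.card

/-- The maximum number of non-overlapping ascents of `π`. -/
def mna (n : ℕ) (π : Equiv.Perm (Fin n)) : ℕ :=
  ((ASC n π).powerset.filter NonOverlapping).sup Finset.card

/-- The first `j` entries of `π` are decreasing. -/
def DecreasingPrefix (n : ℕ) (π : Equiv.Perm (Fin n)) (j : ℕ) : Prop :=
  ∀ i ∈ Finset.Icc 1 (j - 1), wordOf n π (i + 1) < wordOf n π i

instance (n : ℕ) (π : Equiv.Perm (Fin n)) (j : ℕ) : Decidable (DecreasingPrefix n π j) := by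
  unfold DecreasingPrefix; infer_instance

/-- The last `j` entries of `π` are increasing. -/
def IncreasingSuffix (n : ℕ) (π : Equiv.Perm (Fin n)) (j : ℕ) : Prop :=
  ∀ i ∈ Finset.Icc (n - j + 1) (n - 1), wordOf n π i < wordOf n π (i + 1)

instance (n : ℕ) (π : Equiv.Perm (Fin n)) (j : ℕ) : Decidable (IncreasingSuffix n π j) := by
  unfold IncreasingSuffix; infer_instance

/-- The length `ldr(π)` of the maximal initial decreasing run of `π`: the largest `j ∈ [n]`
such that `π₁ > π₂ > ⋯ > π_j`. -/
def ldr (n : ℕ) (π : Equiv.Perm (Fin n)) : ℕ :=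
  ((Finset.Icc 1 n).filter (DecreasingPrefix n π)).sup id

/-- The length `rar(π)` of the maximal final increasing run of `π`: the largest `j ∈ [n]`
such that `π_{n-j+1} < ⋯ < π_n`. -/
def rar (n : ℕ) (π : Equiv.Perm (Fin n)) : ℕ :=
  ((Finset.Icc 1 n).filter (IncreasingSuffix n π)).sup id

end PermWord

open Finset

namespace BinaryTree

variable {α : Type*}

def mirror : BinaryTree α → BinaryTree α
  | nil => nil
  | node a l r => node a r.mirror l.mirror

@[simp]
theorem mirror_mirror (t : BinaryTree α) : t.mirror.mirror = t := by
  induction t with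
  | nil => rfl
  | node a l r hl hr => rw [mirror, mirror, hl, hr]

@[simp]
theorem numNodes_mirror (t : BinaryTree α) : t.mirror.numNodes = t.numNodes := by
  induction t with
  | nil => rfl
  | node a l r hl hr => rw [mirror, numNodes, numNodes, hl, hr, Nat.add_comm r.numNodes]

end BinaryTree

theorem List.length_append_cons {α : Type*} (u v : List α) (a : α) :
    (u ++ a :: v).length = u.length + 1 + v.length := by
  rw [List.length_append, List.length_cons, Nat.add_comm v.length, Nat.add_assoc]

theorem List.Perm.split_range' {u v : List ℕ} {a : ℕ}
    (h : (u ++ v).Perm (List.range' a (u.length + v.length))) (huv : ∀ x ∈ u, ∀ y ∈ v, x ≤ y) :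
    u.Perm (List.range' a u.length) ∧ v.Perm (List.range' (a + u.length) v.length) := by
  have hsu := List.perm_insertionSort (· ≤ ·) u
  have hsv := List.perm_insertionSort (· ≤ ·) v
  have hsorted : (u.insertionSort (· ≤ ·) ++ v.insertionSort (· ≤ ·)).Pairwise (· ≤ ·) :=
    List.pairwise_append.2 ⟨List.pairwise_insertionSort _ _, List.pairwise_insertionSort _ _,
      fun x hx y hy => huv x (hsu.subset hx) y (hsv.subset hy)⟩
  have heq := ((hsu.append hsv).trans h).eq_of_pairwise' hsorted (List.pairwise_le_range' _)
  rw [← List.range'_append, Nat.one_mul] at heq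
  obtain ⟨hu, hv⟩ := List.append_inj heq (by rw [hsu.length_eq, List.length_range'])
  exact ⟨hsu.symm.trans (hu ▸ List.Perm.refl _), hsv.symm.trans (hv ▸ List.Perm.refl _)⟩

namespace PermWord

section Word

def MinAtStart (f : ℕ → ℕ) (i j : ℕ) : Prop := ∀ x ∈ Icc (i + 1) j, f i < f x

def MinAtEnd (f : ℕ → ℕ) (i j : ℕ) : Prop := ∀ x ∈ Icc i (j - 1), f j < f x

instance (f : ℕ → ℕ) (i j : ℕ) : Decidable (MinAtStart f i j) := by
  unfold MinAtStart; infer_instance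

instance (f : ℕ → ℕ) (i j : ℕ) : Decidable (MinAtEnd f i j) := by
  unfold MinAtEnd; infer_instance

/-- `f` and `g` have the same Cartesian tree on the positions `1, …, n`. -/
def SameShape (n : ℕ) (f g : ℕ → ℕ) : Prop :=
  ∀ i j, 1 ≤ i → i ≤ j → j ≤ n →
    (MinAtStart f i j ↔ MinAtStart g i j) ∧ (MinAtEnd f i j ↔ MinAtEnd g i j)

def descentSet (n : ℕ) (f : ℕ → ℕ) : Finset ℕ :=
  (Icc 1 (n - 1)).filter fun i => f (i + 1) < f i

def ascentSet (n : ℕ) (f : ℕ → ℕ) : Finset ℕ :=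
  (Icc 1 (n - 1)).filter fun i => f i < f (i + 1)

def lrMinSet (n : ℕ) (f : ℕ → ℕ) : Finset ℕ := (Icc 1 n).filter (MinAtEnd f 1)

def rlMinSet (n : ℕ) (f : ℕ → ℕ) : Finset ℕ := (Icc 1 n).filter fun i => MinAtStart f i n

def maxNonOverlapping (S : Finset ℕ) : ℕ := (S.powerset.filter NonOverlapping).sup card

def IsDecreasingPrefix (f : ℕ → ℕ) (j : ℕ) : Prop := ∀ i ∈ Icc 1 (j - 1), f (i + 1) < f i

instance (f : ℕ → ℕ) (j : ℕ) : Decidable (IsDecreasingPrefix f j) := by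
  unfold IsDecreasingPrefix; infer_instance

def IsIncreasingSuffix (n : ℕ) (f : ℕ → ℕ) (j : ℕ) : Prop :=
  ∀ i ∈ Icc (n - j + 1) (n - 1), f i < f (i + 1)

instance (n : ℕ) (f : ℕ → ℕ) (j : ℕ) : Decidable (IsIncreasingSuffix n f j) := by
  unfold IsIncreasingSuffix; infer_instance

def initialDescentRun (n : ℕ) (f : ℕ → ℕ) : ℕ :=
  ((Icc 1 n).filter (IsDecreasingPrefix f)).sup id

def finalAscentRun (n : ℕ) (f : ℕ → ℕ) : ℕ :=
  ((Icc 1 n).filter (IsIncreasingSuffix n f)).sup id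

/-- Written so that `stats n (wordOf n π)` is definitionally
`(mnd n π, mna n π, des n π, asc n π, ldr n π, rar n π, lmin n π, rmin n π)`. -/
def stats (n : ℕ) (f : ℕ → ℕ) : ℕ × ℕ × ℕ × ℕ × ℕ × ℕ × ℕ × ℕ :=
  (maxNonOverlapping (descentSet n f), maxNonOverlapping (ascentSet n f),
    #(descentSet n f), #(ascentSet n f), initialDescentRun n f, finalAscentRun n f,
    #(lrMinSet n f), #(rlMinSet n f))

def swapPairs : ℕ × ℕ × ℕ × ℕ × ℕ × ℕ × ℕ × ℕ → ℕ × ℕ × ℕ × ℕ × ℕ × ℕ × ℕ × ℕ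
  | (a, b, c, d, e, f, g, h) => (b, a, d, c, f, e, h, g)

theorem swapPairs_swapPairs (s : ℕ × ℕ × ℕ × ℕ × ℕ × ℕ × ℕ × ℕ) :
    swapPairs (swapPairs s) = s :=
  rfl

def Avoids312Word (n : ℕ) (f : ℕ → ℕ) : Prop :=
  ∀ i ∈ Icc 1 n, ∀ j ∈ Icc 1 n, ∀ k ∈ Icc 1 n, i < j → j < k → ¬(f k < f i ∧ f j < f k)

variable {n : ℕ} {f g : ℕ → ℕ} {i j : ℕ}

theorem minAtStart_succ_iff : MinAtStart f i (i + 1) ↔ f i < f (i + 1) := by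
  simp [MinAtStart]

theorem minAtEnd_succ_iff : MinAtEnd f i (i + 1) ↔ f (i + 1) < f i := by
  simp [MinAtEnd]

namespace SameShape

theorem ascent_iff (h : SameShape n f g) (hi : i ∈ Icc 1 (n - 1)) :
    f i < f (i + 1) ↔ g i < g (i + 1) := by
  rw [mem_Icc] at hi
  rw [← minAtStart_succ_iff, ← minAtStart_succ_iff]
  exact (h i (i + 1) hi.1 (by omega) (by omega)).1

theorem descent_iff (h : SameShape n f g) (hi : i ∈ Icc 1 (n - 1)) :
    f (i + 1) < f i ↔ g (i + 1) < g i := by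
  rw [mem_Icc] at hi
  rw [← minAtEnd_succ_iff, ← minAtEnd_succ_iff]
  exact (h i (i + 1) hi.1 (by omega) (by omega)).2

theorem descentSet_eq (h : SameShape n f g) : descentSet n f = descentSet n g :=
  filter_congr fun _ hi => h.descent_iff hi

theorem ascentSet_eq (h : SameShape n f g) : ascentSet n f = ascentSet n g :=
  filter_congr fun _ hi => h.ascent_iff hi

theorem lrMinSet_eq (h : SameShape n f g) : lrMinSet n f = lrMinSet n g :=
  filter_congr fun i hi => by
    rw [mem_Icc] at hi
    exact (h 1 i le_rfl hi.1 hi.2).2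

theorem rlMinSet_eq (h : SameShape n f g) : rlMinSet n f = rlMinSet n g :=
  filter_congr fun i hi => by
    rw [mem_Icc] at hi
    exact (h i n hi.1 hi.2 le_rfl).1

theorem initialDescentRun_eq (h : SameShape n f g) :
    initialDescentRun n f = initialDescentRun n g := by
  refine congrArg (sup · id) (filter_congr fun j hj => forall₂_congr fun i hi => ?_)
  simp only [mem_Icc] at hi hj
  exact h.descent_iff (mem_Icc.2 ⟨hi.1, by omega⟩)

theorem finalAscentRun_eq (h : SameShape n f g) : finalAscentRun n f = finalAscentRun n g := by
  refine congrArg (sup · id) (filter_congr fun j hj => forall₂_congr fun i hi => ?_)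
  simp only [mem_Icc] at hi hj
  exact h.ascent_iff (mem_Icc.2 ⟨by omega, hi.2⟩)

theorem stats_eq (h : SameShape n f g) : stats n f = stats n g := by
  rw [stats, stats, h.descentSet_eq, h.ascentSet_eq, h.initialDescentRun_eq,
    h.finalAscentRun_eq, h.lrMinSet_eq, h.rlMinSet_eq]

end SameShape

end Word

section Reverse

def revWord (n : ℕ) (f : ℕ → ℕ) (i : ℕ) : ℕ := f (n + 1 - i)

variable {n : ℕ} {f : ℕ → ℕ} {i j : ℕ}

theorem forall_mem_Icc_reflect {P : ℕ → Prop} {a b c : ℕ} (ha : a ≤ c) (hb : b ≤ c) :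
    (∀ x ∈ Icc a b, P (c - x)) ↔ ∀ y ∈ Icc (c - b) (c - a), P y := by
  constructor
  · intro h y hy
    rw [mem_Icc] at hy
    simpa [show c - (c - y) = y by omega] using h (c - y) (mem_Icc.2 ⟨by omega, by omega⟩)
  · intro h x hx
    rw [mem_Icc] at hx
    exact h (c - x) (mem_Icc.2 ⟨by omega, by omega⟩)

theorem minAtStart_revWord (hij : i ≤ j) (hj : j ≤ n) :
    MinAtStart (revWord n f) i j ↔ MinAtEnd f (n + 1 - j) (n + 1 - i) := by
  simp only [MinAtStart, MinAtEnd, revWord]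
  rw [forall_mem_Icc_reflect (P := fun y => f (n + 1 - i) < f y) (by omega) (by omega),
    Nat.sub_sub]

theorem minAtEnd_revWord (hi : 1 ≤ i) (hij : i ≤ j) (hj : j ≤ n) :
    MinAtEnd (revWord n f) i j ↔ MinAtStart f (n + 1 - j) (n + 1 - i) := by
  simp only [MinAtStart, MinAtEnd, revWord]
  rw [forall_mem_Icc_reflect (P := fun y => f (n + 1 - j) < f y) (by omega) (by omega),
    show n + 1 - (j - 1) = n + 1 - j + 1 by omega]

theorem descentSet_revWord : descentSet n (revWord n f) = (ascentSet n f).image (n - ·) := by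
  ext i
  simp only [descentSet, ascentSet, mem_filter, mem_image, mem_Icc]
  simp only [revWord]
  constructor
  · rintro ⟨hi, h⟩
    refine ⟨n - i, ⟨by omega, ?_⟩, by omega⟩
    rwa [show n - i + 1 = n + 1 - i by omega, show n - i = n + 1 - (i + 1) by omega]
  · rintro ⟨j, ⟨hj, h⟩, rfl⟩
    refine ⟨by omega, ?_⟩
    rwa [show n + 1 - (n - j + 1) = j by omega, show n + 1 - (n - j) = j + 1 by omega]

theorem ascentSet_revWord : ascentSet n (revWord n f) = (descentSet n f).image (n - ·) := by
  ext i
  simp only [descentSet, ascentSet, mem_filter, mem_image, mem_Icc]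
  simp only [revWord]
  constructor
  · rintro ⟨hi, h⟩
    refine ⟨n - i, ⟨by omega, ?_⟩, by omega⟩
    rwa [show n - i + 1 = n + 1 - i by omega, show n - i = n + 1 - (i + 1) by omega]
  · rintro ⟨j, ⟨hj, h⟩, rfl⟩
    refine ⟨by omega, ?_⟩
    rwa [show n + 1 - (n - j + 1) = j by omega, show n + 1 - (n - j) = j + 1 by omega]

theorem lrMinSet_revWord : lrMinSet n (revWord n f) = (rlMinSet n f).image (n + 1 - ·) := by
  ext i
  simp only [lrMinSet, rlMinSet, mem_filter, mem_image, mem_Icc]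
  constructor
  · rintro ⟨hi, h⟩
    rw [minAtEnd_revWord le_rfl hi.1 hi.2, Nat.add_sub_cancel] at h
    exact ⟨n + 1 - i, ⟨by omega, h⟩, by omega⟩
  · rintro ⟨j, ⟨hj, h⟩, rfl⟩
    refine ⟨by omega, ?_⟩
    rwa [minAtEnd_revWord le_rfl (by omega) (by omega), Nat.add_sub_cancel,
      show n + 1 - (n + 1 - j) = j by omega]

theorem rlMinSet_revWord : rlMinSet n (revWord n f) = (lrMinSet n f).image (n + 1 - ·) := by
  ext i
  simp only [lrMinSet, rlMinSet, mem_filter, mem_image, mem_Icc]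
  constructor
  · rintro ⟨hi, h⟩
    rw [minAtStart_revWord hi.2 le_rfl, Nat.add_sub_cancel_left] at h
    exact ⟨n + 1 - i, ⟨by omega, h⟩, by omega⟩
  · rintro ⟨j, ⟨hj, h⟩, rfl⟩
    refine ⟨by omega, ?_⟩
    rwa [minAtStart_revWord (by omega) le_rfl, Nat.add_sub_cancel_left,
      show n + 1 - (n + 1 - j) = j by omega]

theorem initialDescentRun_revWord : initialDescentRun n (revWord n f) = finalAscentRun n f := by
  refine congrArg (sup · id) (filter_congr fun j hj => ?_)
  rw [mem_Icc] at hj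
  have hP : IsDecreasingPrefix (revWord n f) j ↔
      ∀ i ∈ Icc 1 (j - 1), (fun y => f y < f (y + 1)) (n - i) :=
    forall₂_congr fun i hi => by
      rw [mem_Icc] at hi
      rw [revWord, revWord, show n + 1 - (i + 1) = n - i by omega,
        show n + 1 - i = n - i + 1 by omega]
  rw [hP, forall_mem_Icc_reflect (P := fun y => f y < f (y + 1)) (by omega) (by omega),
    show n - (j - 1) = n - j + 1 by omega]
  rfl

theorem finalAscentRun_revWord : finalAscentRun n (revWord n f) = initialDescentRun n f := by
  refine congrArg (sup · id) (filter_congr fun j hj => ?_)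
  rw [mem_Icc] at hj
  have hP : IsIncreasingSuffix n (revWord n f) j ↔
      ∀ i ∈ Icc (n - j + 1) (n - 1), (fun y => f (y + 1) < f y) (n - i) :=
    forall₂_congr fun i hi => by
      rw [mem_Icc] at hi
      rw [revWord, revWord, show n + 1 - (i + 1) = n - i by omega,
        show n + 1 - i = n - i + 1 by omega]
  rw [hP, forall_mem_Icc_reflect (P := fun y => f (y + 1) < f y) (by omega) (by omega),
    show n - (n - 1) = 1 by omega, show n - (n - j + 1) = j - 1 by omega]
  rfl

theorem card_image_reflect {S : Finset ℕ} {c : ℕ} (hS : ∀ i ∈ S, i ≤ c) :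
    #(S.image (c - ·)) = #S :=
  card_image_of_injOn fun x hx y hy hxy => by
    have := hS x hx; have := hS y hy; omega

theorem card_le_maxNonOverlapping {S W : Finset ℕ} (hW : W ⊆ S) (h : NonOverlapping W) :
    #W ≤ maxNonOverlapping S :=
  le_sup (f := card) (mem_filter.2 ⟨mem_powerset.2 hW, h⟩)

theorem exists_card_eq_maxNonOverlapping (S : Finset ℕ) :
    ∃ W ⊆ S, NonOverlapping W ∧ #W = maxNonOverlapping S := by
  obtain ⟨W, hW, hcard⟩ := exists_mem_eq_sup (S.powerset.filter NonOverlapping)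
    ⟨∅, mem_filter.2 ⟨empty_mem_powerset S, by simp [NonOverlapping]⟩⟩ card
  rw [mem_filter, mem_powerset] at hW
  exact ⟨W, hW.1, hW.2, hcard.symm⟩

theorem maxNonOverlapping_le_image_reflect {S : Finset ℕ} (hS : ∀ i ∈ S, i ≤ n) :
    maxNonOverlapping S ≤ maxNonOverlapping (S.image (n - ·)) := by
  obtain ⟨W, hWS, hW, hcard⟩ := exists_card_eq_maxNonOverlapping S
  rw [← hcard, ← card_image_reflect fun i hi => hS i (hWS hi)]
  refine card_le_maxNonOverlapping (image_subset_image hWS) ?_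
  simp only [NonOverlapping, mem_image]
  rintro _ ⟨x, hx, rfl⟩ ⟨y, hy, hxy⟩
  have := hS x (hWS hx); have := hS y (hWS hy)
  exact hW y hy (by rwa [show y + 1 = x by omega])

theorem maxNonOverlapping_image_reflect {S : Finset ℕ} (hS : ∀ i ∈ S, i ≤ n) :
    maxNonOverlapping (S.image (n - ·)) = maxNonOverlapping S := by
  refine le_antisymm ?_ (maxNonOverlapping_le_image_reflect hS)
  have hSS : (S.image (n - ·)).image (n - ·) = S := by
    ext x
    simp only [mem_image]
    constructor
    · rintro ⟨_, ⟨y, hy, rfl⟩, rfl⟩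
      rwa [show n - (n - y) = y by have := hS y hy; omega]
    · exact fun hx => ⟨n - x, ⟨x, hx, rfl⟩, by have := hS x hx; omega⟩
  simpa only [hSS] using maxNonOverlapping_le_image_reflect (n := n) (S := S.image (n - ·))
    (by simp)

theorem stats_revWord : stats n (revWord n f) = swapPairs (stats n f) := by
  have bound : ∀ {a b : ℕ} {p : ℕ → Prop} [DecidablePred p], ∀ i ∈ (Icc a b).filter p, i ≤ b :=
    fun i hi => (mem_Icc.1 (mem_filter.1 hi).1).2
  have hasc : ∀ i ∈ ascentSet n f, i ≤ n := fun i hi => (bound i hi).trans (Nat.sub_le n 1)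
  have hdes : ∀ i ∈ descentSet n f, i ≤ n := fun i hi => (bound i hi).trans (Nat.sub_le n 1)
  have hlr : ∀ i ∈ lrMinSet n f, i ≤ n + 1 := fun i hi => (bound i hi).trans (Nat.le_succ n)
  have hrl : ∀ i ∈ rlMinSet n f, i ≤ n + 1 := fun i hi => (bound i hi).trans (Nat.le_succ n)
  rw [stats, stats, descentSet_revWord, ascentSet_revWord, lrMinSet_revWord, rlMinSet_revWord,
    initialDescentRun_revWord, finalAscentRun_revWord, maxNonOverlapping_image_reflect hasc,
    maxNonOverlapping_image_reflect hdes, card_image_reflect hasc, card_image_reflect hdes,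
    card_image_reflect hlr, card_image_reflect hrl]
  rfl

end Reverse

section Window

variable {f g f' g' : ℕ → ℕ} {i j : ℕ}

theorem minAtStart_shift {a : ℕ} (hij : i ≤ j) (h : ∀ x ∈ Icc i j, f (a + x) = g x) :
    MinAtStart f (a + i) (a + j) ↔ MinAtStart g i j := by
  simp only [MinAtStart, ← h i (mem_Icc.2 ⟨le_rfl, hij⟩)]
  constructor
  · intro H x hx
    rw [mem_Icc] at hx
    rw [← h x (mem_Icc.2 ⟨by omega, hx.2⟩)]
    exact H (a + x) (mem_Icc.2 ⟨by omega, by omega⟩)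
  · intro H x hx
    rw [mem_Icc] at hx
    have := H (x - a) (mem_Icc.2 ⟨by omega, by omega⟩)
    rwa [← h _ (mem_Icc.2 ⟨by omega, by omega⟩), Nat.add_sub_cancel' (by omega)] at this

theorem minAtEnd_shift {a : ℕ} (hi : 1 ≤ i) (hij : i ≤ j) (h : ∀ x ∈ Icc i j, f (a + x) = g x) :
    MinAtEnd f (a + i) (a + j) ↔ MinAtEnd g i j := by
  simp only [MinAtEnd, ← h j (mem_Icc.2 ⟨hij, le_rfl⟩)]
  constructor
  · intro H x hx
    rw [mem_Icc] at hx
    rw [← h x (mem_Icc.2 ⟨hx.1, by omega⟩)]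
    exact H (a + x) (mem_Icc.2 ⟨by omega, by omega⟩)
  · intro H x hx
    rw [mem_Icc] at hx
    have := H (x - a) (mem_Icc.2 ⟨by omega, by omega⟩)
    rwa [← h _ (mem_Icc.2 ⟨by omega, by omega⟩), Nat.add_sub_cancel' (by omega)] at this

theorem SameShape.window {p a : ℕ} (h : SameShape p g g')
    (hf : ∀ x ∈ Icc 1 p, f (a + x) = g x) (hf' : ∀ x ∈ Icc 1 p, f' (a + x) = g' x)
    (hi : a + 1 ≤ i) (hij : i ≤ j) (hj : j ≤ a + p) :
    (MinAtStart f i j ↔ MinAtStart f' i j) ∧ (MinAtEnd f i j ↔ MinAtEnd f' i j) := by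
  obtain ⟨i, rfl⟩ : ∃ i', i = a + i' := ⟨i - a, by omega⟩
  obtain ⟨j, rfl⟩ : ∃ j', j = a + j' := ⟨j - a, by omega⟩
  have hw : ∀ {F G : ℕ → ℕ}, (∀ x ∈ Icc 1 p, F (a + x) = G x) →
      ∀ x ∈ Icc i j, F (a + x) = G x := fun hF x hx => by
    rw [mem_Icc] at hx
    exact hF x (mem_Icc.2 ⟨by omega, by omega⟩)
  rw [minAtStart_shift (by omega) (hw hf), minAtStart_shift (by omega) (hw hf'),
    minAtEnd_shift (by omega) (by omega) (hw hf), minAtEnd_shift (by omega) (by omega) (hw hf')]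
  exact h i j (by omega) (by omega) (by omega)

theorem Avoids312Word.window {N p a : ℕ} (h : Avoids312Word N f)
    (hf : ∀ x ∈ Icc 1 p, f (a + x) = g x) (hp : a + p ≤ N) : Avoids312Word p g := by
  intro i hi j hj k hk hij hjk
  rw [← hf i hi, ← hf j hj, ← hf k hk]
  rw [mem_Icc] at hi hj hk
  exact h (a + i) (mem_Icc.2 ⟨by omega, by omega⟩) (a + j) (mem_Icc.2 ⟨by omega, by omega⟩)
    (a + k) (mem_Icc.2 ⟨by omega, by omega⟩) (by omega) (by omega)

end Window

section Concat

def wordOfList (w : List ℕ) (i : ℕ) : ℕ :=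
  if h : 1 ≤ i ∧ i ≤ w.length then w[i - 1] else 0

variable {u v u' v' : List ℕ} {m m' : ℕ} {i j : ℕ}

theorem wordOfList_append_left (hi : i ≤ u.length) :
    wordOfList (u ++ m :: v) i = wordOfList u i := by
  unfold wordOfList
  by_cases h : 1 ≤ i
  · rw [dif_pos ⟨h, by rw [List.length_append_cons]; omega⟩, dif_pos ⟨h, hi⟩,
      List.getElem_append_left]
  · rw [dif_neg (by omega), dif_neg (by omega)]

theorem wordOfList_append_mid : wordOfList (u ++ m :: v) (u.length + 1) = m := by
  simp [wordOfList]

theorem wordOfList_append_right (hi : 1 ≤ i) :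
    wordOfList (u ++ m :: v) (u.length + 1 + i) = wordOfList v i := by
  have hN := List.length_append_cons u v m
  unfold wordOfList
  by_cases h : i ≤ v.length
  · rw [dif_pos ⟨by omega, by omega⟩, dif_pos ⟨hi, h⟩, List.getElem_append_right (by omega)]
    simp only [show u.length + 1 + i - 1 - u.length = (i - 1) + 1 by omega, List.getElem_cons_succ]
  · rw [dif_neg (by omega), dif_neg (by omega)]

theorem wordOfList_mem {w : List ℕ} (h1 : 1 ≤ i) (h2 : i ≤ w.length) : wordOfList w i ∈ w := by
  rw [wordOfList, dif_pos ⟨h1, h2⟩]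
  exact List.getElem_mem _

theorem exists_wordOfList_eq {w : List ℕ} {x : ℕ} (hx : x ∈ w) :
    ∃ i, 1 ≤ i ∧ i ≤ w.length ∧ wordOfList w i = x := by
  obtain ⟨i, hi, rfl⟩ := List.mem_iff_getElem.1 hx
  exact ⟨i + 1, by omega, hi, by simp [wordOfList, hi]⟩

theorem wordOfList_reverse (w : List ℕ) :
    wordOfList w.reverse = revWord w.length (wordOfList w) := by
  funext i
  unfold revWord wordOfList
  by_cases h : 1 ≤ i ∧ i ≤ w.length
  · rw [dif_pos (by rwa [List.length_reverse]), dif_pos ⟨by omega, by omega⟩,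
      List.getElem_reverse]
    congr 1
    omega
  · rw [dif_neg (by rwa [List.length_reverse]), dif_neg (by omega)]

theorem lt_wordOfList_append_cons (hm : ∀ x ∈ u ++ v, m < x) (hi1 : 1 ≤ i)
    (hiN : i ≤ u.length + 1 + v.length) (hi : i ≠ u.length + 1) :
    m < wordOfList (u ++ m :: v) i := by
  apply hm
  rcases Nat.lt_or_gt_of_ne hi with hi | hi
  · rw [wordOfList_append_left (by omega)]
    exact List.mem_append_left _ (wordOfList_mem hi1 (by omega))
  · obtain ⟨k, rfl⟩ : ∃ k, i = u.length + 1 + k := ⟨i - (u.length + 1), by omega⟩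
    rw [wordOfList_append_right (by omega)]
    exact List.mem_append_right _ (wordOfList_mem (by omega) (by omega))

theorem minAtStart_append_cons_iff (hm : ∀ x ∈ u ++ v, m < x) (hi : 1 ≤ i)
    (hiu : i ≤ u.length + 1) (hju : u.length + 1 ≤ j) (hj : j ≤ u.length + 1 + v.length) :
    MinAtStart (wordOfList (u ++ m :: v)) i j ↔ i = u.length + 1 := by
  constructor
  · intro h
    by_contra hne
    have := h (u.length + 1) (mem_Icc.2 ⟨by omega, hju⟩)
    rw [wordOfList_append_mid] at this
    exact (lt_wordOfList_append_cons hm hi (by omega) hne).not_gt this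
  · rintro rfl x hx
    rw [mem_Icc] at hx
    rw [wordOfList_append_mid]
    exact lt_wordOfList_append_cons hm (by omega) (by omega) (by omega)

theorem minAtEnd_append_cons_iff (hm : ∀ x ∈ u ++ v, m < x) (hi : 1 ≤ i)
    (hiu : i ≤ u.length + 1) (hju : u.length + 1 ≤ j) (hj : j ≤ u.length + 1 + v.length) :
    MinAtEnd (wordOfList (u ++ m :: v)) i j ↔ j = u.length + 1 := by
  constructor
  · intro h
    by_contra hne
    have := h (u.length + 1) (mem_Icc.2 ⟨hiu, by omega⟩)
    rw [wordOfList_append_mid] at this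
    exact (lt_wordOfList_append_cons hm (by omega) hj hne).not_gt this
  · rintro rfl x hx
    rw [mem_Icc] at hx
    rw [wordOfList_append_mid]
    exact lt_wordOfList_append_cons hm (by omega) (by omega) (by omega)

theorem sameShape_append_cons (hm : ∀ x ∈ u ++ v, m < x) (hm' : ∀ x ∈ u' ++ v', m' < x)
    (hu : u'.length = u.length) (hv : v'.length = v.length)
    (hsu : SameShape u.length (wordOfList u) (wordOfList u'))
    (hsv : SameShape v.length (wordOfList v) (wordOfList v')) :
    SameShape (u ++ m :: v).length (wordOfList (u ++ m :: v)) (wordOfList (u' ++ m' :: v')) := by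
  intro i j hi hij hj
  rw [List.length_append_cons] at hj
  by_cases hju : j ≤ u.length
  · refine hsu.window (a := 0) (fun x hx => ?_) (fun x hx => ?_) (by omega) hij (by omega) <;>
      rw [mem_Icc] at hx <;> rw [zero_add, wordOfList_append_left (by omega)]
  by_cases hiu : u.length + 2 ≤ i
  · refine hsv.window (a := u.length + 1) (fun x hx => ?_) (fun x hx => ?_) (by omega) hij
      (by omega)
    · exact wordOfList_append_right (mem_Icc.1 hx).1
    · rw [← hu]
      exact wordOfList_append_right (mem_Icc.1 hx).1
  rw [minAtStart_append_cons_iff hm hi (by omega) (by omega) hj,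
    minAtStart_append_cons_iff hm' hi (by omega) (by omega) (by omega),
    minAtEnd_append_cons_iff hm hi (by omega) (by omega) hj,
    minAtEnd_append_cons_iff hm' hi (by omega) (by omega) (by omega), hu]
  exact ⟨Iff.rfl, Iff.rfl⟩

theorem Avoids312Word.of_append_cons
    (h : Avoids312Word (u ++ m :: v).length (wordOfList (u ++ m :: v)))
    (hm : ∀ x ∈ u ++ v, m < x) :
    Avoids312Word u.length (wordOfList u) ∧ Avoids312Word v.length (wordOfList v) ∧
      ∀ x ∈ u, ∀ y ∈ v, x ≤ y := by
  rw [List.length_append_cons] at h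
  refine ⟨h.window (a := 0) (fun x hx => ?_) (by omega),
    h.window (a := u.length + 1) (fun x hx => wordOfList_append_right (mem_Icc.1 hx).1)
      (by omega), fun x hx y hy => ?_⟩
  · rw [zero_add, wordOfList_append_left (mem_Icc.1 hx).2]
  obtain ⟨i, hi1, hi2, rfl⟩ := exists_wordOfList_eq hx
  obtain ⟨k, hk1, hk2, rfl⟩ := exists_wordOfList_eq hy
  have := h i (mem_Icc.2 ⟨hi1, by omega⟩) (u.length + 1) (mem_Icc.2 ⟨by omega, by omega⟩)
    (u.length + 1 + k) (mem_Icc.2 ⟨by omega, by omega⟩) (by omega) (by omega)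
  rw [wordOfList_append_left hi2, wordOfList_append_mid, wordOfList_append_right hk1] at this
  have := hm _ (List.mem_append_right _ hy)
  omega

theorem Avoids312Word.append_cons (hm : ∀ x ∈ u ++ v, m < x)
    (hu : Avoids312Word u.length (wordOfList u)) (hv : Avoids312Word v.length (wordOfList v))
    (hsep : ∀ x ∈ u, ∀ y ∈ v, x ≤ y) :
    Avoids312Word (u ++ m :: v).length (wordOfList (u ++ m :: v)) := by
  rintro i hi j hj k hk hij hjk ⟨hki, hjk'⟩
  simp only [mem_Icc, List.length_append_cons] at hi hj hk
  rcases lt_trichotomy k (u.length + 1) with hk' | rfl | hk'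
  · rw [wordOfList_append_left (i := k) (by omega), wordOfList_append_left (i := i) (by omega)]
      at hki
    rw [wordOfList_append_left (i := k) (by omega), wordOfList_append_left (i := j) (by omega)]
      at hjk'
    exact hu i (mem_Icc.2 ⟨by omega, by omega⟩) j (mem_Icc.2 ⟨by omega, by omega⟩) k
      (mem_Icc.2 ⟨by omega, by omega⟩) hij hjk ⟨hki, hjk'⟩
  · rw [wordOfList_append_mid] at hjk'
    exact (lt_wordOfList_append_cons hm hj.1 hj.2 (by omega)).not_gt hjk'
  obtain ⟨k, rfl⟩ : ∃ k', k = u.length + 1 + k' := ⟨k - (u.length + 1), by omega⟩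
  rw [wordOfList_append_right (by omega)] at hki hjk'
  rcases lt_trichotomy i (u.length + 1) with hi' | rfl | hi'
  · rw [wordOfList_append_left (by omega)] at hki
    exact hki.not_ge (hsep _ (wordOfList_mem hi.1 (by omega)) _
      (wordOfList_mem (by omega) (by omega)))
  · rw [wordOfList_append_mid] at hki
    exact hki.not_gt (hm _ (List.mem_append_right _ (wordOfList_mem (by omega) (by omega))))
  obtain ⟨i, rfl⟩ : ∃ i', i = u.length + 1 + i' := ⟨i - (u.length + 1), by omega⟩
  obtain ⟨j, rfl⟩ : ∃ j', j = u.length + 1 + j' := ⟨j - (u.length + 1), by omega⟩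
  rw [wordOfList_append_right (by omega)] at hki hjk'
  exact hv i (mem_Icc.2 ⟨by omega, by omega⟩) j (mem_Icc.2 ⟨by omega, by omega⟩) k
    (mem_Icc.2 ⟨by omega, by omega⟩) (by omega) (by omega) ⟨hki, hjk'⟩

end Concat

section Tree

open BinaryTree

/-- The in-order reading of `t` with the nodes labelled `k, k + 1, …` in preorder: the
312-avoiding word whose Cartesian tree is `t`. -/
def treeWord : BinaryTree Unit → ℕ → List ℕ
  | .nil, _ => []
  | .node _ l r, k => treeWord l (k + 1) ++ k :: treeWord r (k + 1 + l.numNodes)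

@[simp]
theorem length_treeWord (t : BinaryTree Unit) (k : ℕ) : (treeWord t k).length = t.numNodes := by
  induction t generalizing k with
  | nil => rfl
  | node _ l r hl hr => rw [treeWord, List.length_append_cons, hl, hr, numNodes, Nat.add_right_comm]

theorem treeWord_perm_range' (t : BinaryTree Unit) (k : ℕ) :
    (treeWord t k).Perm (List.range' k t.numNodes) := by
  induction t generalizing k with
  | nil => rfl
  | node _ l r hl hr =>
    rw [treeWord, numNodes, List.range'_succ, ← List.range'_append, Nat.one_mul]
    exact List.perm_middle.trans (((hl _).append (hr _)).cons k)

theorem mem_treeWord {t : BinaryTree Unit} {k x : ℕ} :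
    x ∈ treeWord t k ↔ k ≤ x ∧ x < k + t.numNodes := by
  rw [(treeWord_perm_range' t k).mem_iff, List.mem_range'_1]

theorem lt_of_mem_treeWord_append {l r : BinaryTree Unit} {k a x : ℕ}
    (hx : x ∈ treeWord l (k + 1) ++ treeWord r a) (ha : k < a) : k < x := by
  rcases List.mem_append.1 hx with hx | hx <;> rw [mem_treeWord] at hx <;> omega

theorem avoids312Word_treeWord (t : BinaryTree Unit) (k : ℕ) :
    Avoids312Word (treeWord t k).length (wordOfList (treeWord t k)) := by
  induction t generalizing k with
  | nil => intro i hi; simp at hi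
  | node _ l r hl hr =>
    refine Avoids312Word.append_cons (fun x hx => lt_of_mem_treeWord_append hx (by omega))
      (hl _) (hr _) fun x hx y hy => ?_
    rw [mem_treeWord] at hx hy
    omega

theorem treeWord_injective {t t' : BinaryTree Unit} {k : ℕ} (h : treeWord t k = treeWord t' k) :
    t = t' := by
  induction t generalizing t' k with
  | nil => cases t' <;> simp_all [treeWord]
  | node _ l r hl hr =>
    cases t' with
    | nil => simp [treeWord] at h
    | node _ l' r' =>
      simp only [treeWord] at h
      have hk : ∀ s : BinaryTree Unit, k ∉ treeWord s (k + 1) := fun s hs => by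
        rw [mem_treeWord] at hs; omega
      -- the root label `k` sits right after the left subtree on both sides
      have hlen : l.numNodes = l'.numNodes := by
        simpa [List.idxOf_append_of_notMem (hk _)] using congrArg (List.idxOf k) h
      obtain ⟨hl', hr'⟩ := List.append_inj h (by rw [length_treeWord, length_treeWord, hlen])
      rw [hlen] at hr'
      rw [hl hl', hr (List.cons_injective hr')]

theorem sameShape_treeWord_reverse_mirror (t : BinaryTree Unit) (k k' : ℕ) :
    SameShape (treeWord t k).length (wordOfList (treeWord t k))
      (wordOfList (treeWord t.mirror k').reverse) := by
  induction t generalizing k k' with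
  | nil => intro i j hi hij hj; simp only [treeWord, List.length_nil] at hj; omega
  | node _ l r hl hr =>
    have hrev : (treeWord (node () l r).mirror k').reverse =
        (treeWord l.mirror (k' + 1 + r.numNodes)).reverse ++ k' ::
          (treeWord r.mirror (k' + 1)).reverse := by
      simp [mirror, treeWord]
    rw [hrev, treeWord]
    refine sameShape_append_cons (fun x hx => lt_of_mem_treeWord_append hx (by omega))
      (fun x hx => ?_) (by simp) (by simp)
      (by simpa using hl (k + 1) (k' + 1 + r.numNodes))
      (by simpa using hr (k + 1 + l.numNodes) (k' + 1))
    rcases List.mem_append.1 hx with hx | hx <;> rw [List.mem_reverse, mem_treeWord] at hx <;>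
      omega

theorem stats_treeWord_mirror (t : BinaryTree Unit) (k : ℕ) :
    stats t.numNodes (wordOfList (treeWord t.mirror k)) =
      swapPairs (stats t.numNodes (wordOfList (treeWord t k))) := by
  have h := sameShape_treeWord_reverse_mirror t k k
  have hrev := wordOfList_reverse (treeWord t.mirror k).reverse
  rw [length_treeWord] at h
  rw [List.reverse_reverse, List.length_reverse, length_treeWord, numNodes_mirror] at hrev
  rw [hrev, stats_revWord, h.stats_eq]

theorem exists_treeWord_eq {w : List ℕ} {c : ℕ} (hw : w.Perm (List.range' c w.length))
    (ha : Avoids312Word w.length (wordOfList w)) : ∃ t, treeWord t c = w := by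
  induction hN : w.length using Nat.strong_induction_on generalizing w c with
  | _ N ih =>
    by_cases hne : w = []
    · exact ⟨nil, hne.symm⟩
    have hc : c ∈ w :=
      hw.mem_iff.2 (List.mem_range'_1.2 ⟨le_rfl, by have := List.length_pos_iff.2 hne; omega⟩)
    obtain ⟨u, v, rfl⟩ := List.append_of_mem hc
    rw [List.length_append_cons] at hN
    have hperm : (u ++ v).Perm (List.range' (c + 1) (u.length + v.length)) := by
      have := List.perm_middle.symm.trans hw
      rwa [List.length_append_cons, Nat.add_right_comm, List.range'_succ, List.perm_cons] at this
    have hm : ∀ x ∈ u ++ v, c < x := fun x hx => by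
      have := List.mem_range'_1.1 (hperm.subset hx)
      omega
    obtain ⟨hau, hav, hsep⟩ := ha.of_append_cons hm
    obtain ⟨hu, hv⟩ := hperm.split_range' hsep
    obtain ⟨l, rfl⟩ := ih u.length (by omega) hu hau rfl
    obtain ⟨r, rfl⟩ := ih _ (by omega) hv hav rfl
    exact ⟨node () l r, by rw [treeWord, length_treeWord]⟩

end Tree

section Perm

open BinaryTree

variable {n : ℕ}

def toList (π : Equiv.Perm (Fin n)) : List ℕ := List.ofFn fun i => (π i : ℕ) + 1

@[simp]
theorem length_toList (π : Equiv.Perm (Fin n)) : (toList π).length = n :=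
  List.length_ofFn

theorem wordOfList_toList (π : Equiv.Perm (Fin n)) : wordOfList (toList π) = wordOf n π := by
  funext i
  unfold wordOfList wordOf
  by_cases h : 1 ≤ i ∧ i ≤ n
  · rw [dif_pos (by rwa [length_toList]), dif_pos h]
    simp [toList]
  · rw [dif_neg (by rwa [length_toList]), dif_neg h]

theorem toList_injective : Function.Injective (toList (n := n)) := fun π σ h => by
  ext i
  simpa [toList] using congrFun (List.ofFn_injective h) i

theorem toList_perm_range' (π : Equiv.Perm (Fin n)) : (toList π).Perm (List.range' 1 n) := by
  have : List.ofFn (fun i : Fin n => (i : ℕ) + 1) = List.range' 1 n :=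
    List.ext_getElem (by simp) fun i _ _ => by simp [Nat.add_comm]
  exact this ▸ Equiv.Perm.ofFn_comp_perm π fun i : Fin n => (i : ℕ) + 1

theorem exists_toList_eq {L : List ℕ} (hL : L.Perm (List.range' 1 n)) :
    ∃ π : Equiv.Perm (Fin n), toList π = L := by
  have hlen : L.length = n := by simpa using hL.length_eq
  have hval : ∀ (i : ℕ) (hi : i < L.length), 1 ≤ L[i] ∧ L[i] < 1 + n := fun i hi =>
    List.mem_range'_1.1 (hL.subset (List.getElem_mem hi))
  let σ : Fin n → Fin n := fun i => ⟨L[(i : ℕ)] - 1, by have := hval i (by omega); omega⟩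
  have hσ : Function.Injective σ := fun i j hij => by
    have := hval i (by omega); have := hval j (by omega)
    have hij' : L[(i : ℕ)] = L[(j : ℕ)] := by simp only [σ, Fin.ext_iff] at hij; omega
    exact Fin.ext ((hL.nodup_iff.2 List.nodup_range').getElem_inj_iff.1 hij')
  refine ⟨Equiv.ofBijective σ (Finite.injective_iff_bijective.1 hσ),
    List.ext_getElem (by rw [length_toList, hlen]) fun i _ _ => ?_⟩
  have := hval i (by omega)
  simp only [toList, List.getElem_ofFn, Equiv.ofBijective_apply, σ]
  omega

theorem card_avoiders_eq_card_trees (Q : (ℕ → ℕ) → Prop) [DecidablePred Q] :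
    #{π : Equiv.Perm (Fin n) | Avoids312 n π ∧ Q (wordOf n π)} =
      #{t ∈ treesOfNumNodesEq n | Q (wordOfList (treeWord t 1))} := by
  rw [← card_image_of_injective _ toList_injective,
    ← card_image_of_injective _ fun t t' (h : treeWord t 1 = treeWord t' 1) => treeWord_injective h]
  congr 1
  ext L
  simp only [mem_image, mem_filter, mem_univ, true_and, mem_treesOfNumNodesEq]
  constructor
  · rintro ⟨π, ⟨hπ, hQ⟩, rfl⟩
    obtain ⟨t, ht⟩ := exists_treeWord_eq (w := toList π) (c := 1)
      (by rw [length_toList]; exact toList_perm_range' π) (by rwa [length_toList, wordOfList_toList])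
    refine ⟨t, ⟨?_, by rwa [ht, wordOfList_toList]⟩, ht⟩
    rw [← length_treeWord t 1, ht, length_toList]
  · rintro ⟨t, ⟨rfl, hQ⟩, rfl⟩
    obtain ⟨π, hπ⟩ := exists_toList_eq (treeWord_perm_range' t 1)
    refine ⟨π, ⟨?_, by rwa [← wordOfList_toList, hπ]⟩, hπ⟩
    have := avoids312Word_treeWord t 1
    rwa [← hπ, length_toList, wordOfList_toList] at this

theorem card_avoiders_stats_eq_swapPairs (P : ℕ × ℕ × ℕ × ℕ × ℕ × ℕ × ℕ × ℕ → Prop)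
    [DecidablePred P] :
    #{π : Equiv.Perm (Fin n) | Avoids312 n π ∧ P (stats n (wordOf n π))} =
      #{π : Equiv.Perm (Fin n) | Avoids312 n π ∧ P (swapPairs (stats n (wordOf n π)))} := by
  rw [card_avoiders_eq_card_trees (fun f => P (stats n f)),
    card_avoiders_eq_card_trees (fun f => P (swapPairs (stats n f)))]
  refine card_nbij' mirror mirror (fun t ht => ?_) (fun t ht => ?_)
    (fun t _ => mirror_mirror t) (fun t _ => mirror_mirror t)
  all_goals
    simp only [coe_filter, mem_treesOfNumNodesEq, Set.mem_ofPred_eq, numNodes_mirror] at ht ⊢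
    obtain ⟨rfl, ht⟩ := ht
    refine ⟨rfl, ?_⟩
  · rwa [stats_treeWord_mirror, swapPairs_swapPairs]
  · rwa [stats_treeWord_mirror]

end Perm

end PermWord

open scoped Classical in
theorem kitaev_zhang_equidistribution_general
    (n : ℕ) (a1 a2 a3 a4 a5 a6 a7 a8 : ℕ) :
    ((Finset.univ : Finset (Equiv.Perm (Fin n))).filter (fun π =>
        PermWord.Avoids312 n π ∧ PermWord.mnd n π = a1 ∧ PermWord.mna n π = a2 ∧
        PermWord.des n π = a3 ∧ PermWord.asc n π = a4 ∧ PermWord.ldr n π = a5 ∧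
        PermWord.rar n π = a6 ∧ PermWord.lmin n π = a7 ∧ PermWord.rmin n π = a8)).card =
    ((Finset.univ : Finset (Equiv.Perm (Fin n))).filter (fun π =>
        PermWord.Avoids312 n π ∧ PermWord.mna n π = a1 ∧ PermWord.mnd n π = a2 ∧
        PermWord.asc n π = a3 ∧ PermWord.des n π = a4 ∧ PermWord.rar n π = a5 ∧
        PermWord.ldr n π = a6 ∧ PermWord.rmin n π = a7 ∧ PermWord.lmin n π = a8)).card :=
  PermWord.card_avoiders_stats_eq_swapPairs fun s => s.1 = a1 ∧ s.2.1 = a2 ∧ s.2.2.1 = a3 ∧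
    s.2.2.2.1 = a4 ∧ s.2.2.2.2.1 = a5 ∧ s.2.2.2.2.2.1 = a6 ∧ s.2.2.2.2.2.2.1 = a7 ∧
    s.2.2.2.2.2.2.2 = a8

open scoped Classical in
/-- **Theorem (Kitaev–Zhang symmetry on `312`-avoiding permutations).**  For `n ≥ 1`,
the 8-tuples `(mnd, mna, des, asc, ldr, rar, lmin, rmin)` and
`(mna, mnd, asc, des, rar, ldr, rmin, lmin)` are equidistributed over `S_n(312)`. -/
theorem kitaev_zhang_equidistribution
    (n : ℕ) (hn : 1 ≤ n) (a1 a2 a3 a4 a5 a6 a7 a8 : ℕ) :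
    ((Finset.univ : Finset (Equiv.Perm (Fin n))).filter (fun π =>
        PermWord.Avoids312 n π ∧ PermWord.mnd n π = a1 ∧ PermWord.mna n π = a2 ∧
        PermWord.des n π = a3 ∧ PermWord.asc n π = a4 ∧ PermWord.ldr n π = a5 ∧
        PermWord.rar n π = a6 ∧ PermWord.lmin n π = a7 ∧ PermWord.rmin n π = a8)).card =
    ((Finset.univ : Finset (Equiv.Perm (Fin n))).filter (fun π =>
        PermWord.Avoids312 n π ∧ PermWord.mna n π = a1 ∧ PermWord.mnd n π = a2 ∧
        PermWord.asc n π = a3 ∧ PermWord.des n π = a4 ∧ PermWord.rar n π = a5 ∧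
        PermWord.ldr n π = a6 ∧ PermWord.rmin n π = a7 ∧ PermWord.lmin n π = a8)).card :=
  kitaev_zhang_equidistribution_general n a1 a2 a3 a4 a5 a6 a7 a8
end
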